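/- arXiv:1601.08151 — 7 statements merged into one kernel-verified Lean document; each statement's English description precedes it below -/
import Mathlib

section
/- If X and Y are real random variables with X smaller than Y in the convex order (i.e., E[ψ(X)] ≤ E[ψ(Y)] for all convex ψ for which the expectations exist), and E[ψ(X)] = E[ψ(Y)] for some strongly convex function ψ, then X and Y have the same distribution. -/
/-!
Write `g = ψ - (m/2) x²`, which is convex. For every `t`, both `φₜ(x) = (m/2) (x - t)₊²` and
`ψ - φₜ = g + (m/2) (t - x)₊² + (affine)` are convex, so the convex order gives
`E φₜ(X) ≤ E φₜ(Y)` and `E (ψ - φₜ)(X) ≤ E (ψ - φₜ)(Y)`; as `E ψ(X) = E ψ(Y)`, both are equalities.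
Hence `t ↦ E (X - t)₊²` and `t ↦ E (Y - t)₊²` agree. Their second differences
`(G(t - 2h) - 2 G(t - h) + G(t)) / 2h²` are expectations of continuous ramps from `0` at `t - 2h` to
`1` at `t`, which converge to `P(· ≥ t)` as `h → 0⁺`, so the laws of `X` and `Y` coincide.
-/

open MeasureTheory Set Filter Topology

theorem ConvexOn.sq_max_zero {s : Set ℝ} {f : ℝ → ℝ} (hf : ConvexOn ℝ s f) :
    ConvexOn ℝ s fun x => max (f x) 0 ^ 2 :=
  (hf.sup (convexOn_const 0 hf.1)).pow (fun _ _ => le_sup_right) 2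

theorem convexOn_univ_affine (a b : ℝ) : ConvexOn ℝ univ fun x : ℝ => a * x + b :=
  ((LinearMap.mulLeft ℝ a).convexOn convex_univ).add_const b

theorem StrongConvexOn.convexOn_sub_sq_max_sub {ψ : ℝ → ℝ} {m : ℝ} (hm : 0 ≤ m)
    (hψ : StrongConvexOn univ m ψ) (t : ℝ) :
    ConvexOn ℝ univ (ψ - fun x => m / 2 * max (x - t) 0 ^ 2) := by
  have hleft : ConvexOn ℝ univ fun x : ℝ => max (t - x) 0 ^ 2 :=
    ((convexOn_const t convex_univ).sub (concaveOn_id convex_univ)).sq_max_zero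
  refine (((strongConvexOn_iff_convex.1 hψ).add (hleft.smul (by positivity : 0 ≤ m / 2))).add
    (convexOn_univ_affine (m * t) (-(m * t ^ 2 / 2)))).congr fun x _ => ?_
  simp only [Pi.add_apply, Pi.sub_apply, smul_eq_mul, Real.norm_eq_abs, sq_abs]
  rcases le_total x t with hxt | htx
  · rw [max_eq_left (sub_nonneg.2 hxt), max_eq_right (sub_nonpos.2 hxt)]; ring
  · rw [max_eq_right (sub_nonpos.2 htx), max_eq_left (sub_nonneg.2 htx)]; ring

def ConvexOrderLE {Ω : Type*} [MeasurableSpace Ω] (P : Measure Ω) (X Y : Ω → ℝ) : Prop :=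
  ∀ ψ : ℝ → ℝ, ConvexOn ℝ univ ψ → Integrable (fun ω => ψ (X ω)) P →
    Integrable (fun ω => ψ (Y ω)) P → ∫ ω, ψ (X ω) ∂P ≤ ∫ ω, ψ (Y ω) ∂P

section

variable {Ω : Type*} [MeasurableSpace Ω] {P : Measure Ω} {X Y Z : Ω → ℝ} {ψ : ℝ → ℝ} {m : ℝ}

theorem ConvexOrderLE.integral_comp_eq_of_convexOn_sub (hXY : ConvexOrderLE P X Y) {φ : ℝ → ℝ}
    (hφ : ConvexOn ℝ univ φ) (hψφ : ConvexOn ℝ univ (ψ - φ))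
    (hψX : Integrable (fun ω => ψ (X ω)) P) (hψY : Integrable (fun ω => ψ (Y ω)) P)
    (hφX : Integrable (fun ω => φ (X ω)) P) (hφY : Integrable (fun ω => φ (Y ω)) P)
    (heq : ∫ ω, ψ (X ω) ∂P = ∫ ω, ψ (Y ω) ∂P) :
    ∫ ω, φ (X ω) ∂P = ∫ ω, φ (Y ω) ∂P := by
  refine le_antisymm (hXY φ hφ hφX hφY) ?_
  have hsub := hXY (ψ - φ) hψφ (hψX.sub hφX) (hψY.sub hφY)
  simp only [Pi.sub_apply] at hsub
  rw [integral_sub hψX hφX, integral_sub hψY hφY] at hsub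
  linarith

variable [IsFiniteMeasure P]

theorem StrongConvexOn.memLp_two_of_integrable_comp (hm : 0 < m) (hψ : StrongConvexOn univ m ψ)
    (hZ : AEStronglyMeasurable Z P) (hψZ : Integrable (fun ω => ψ (Z ω)) P) : MemLp Z 2 P := by
  have hconv := strongConvexOn_iff_convex.1 hψ
  obtain ⟨c, c', hcc'⟩ := hconv.exists_affine_le_real isClosed_univ
    (hconv.continuousOn isOpen_univ).lowerSemicontinuousOn
  have hbound (x : ℝ) : x ^ 2 ≤ (4 * m * (ψ x - c') + 4 * c ^ 2) / m ^ 2 := by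
    have hx := hcc' x (mem_univ x)
    rw [Real.norm_eq_abs, sq_abs] at hx
    rw [le_div_iff₀ (by positivity)]
    nlinarith [sq_nonneg (m * x + 2 * c), mul_le_mul_of_nonneg_left hx hm.le]
  rw [memLp_two_iff_integrable_sq hZ]
  refine ((((hψZ.sub (integrable_const c')).const_mul (4 * m)).add
    (integrable_const (4 * c ^ 2))).div_const (m ^ 2)).mono' (hZ.pow 2) (ae_of_all _ fun ω => ?_)
  rw [Real.norm_eq_abs, abs_of_nonneg (sq_nonneg _)]
  exact hbound (Z ω)

theorem integrable_sq_max_sub (hZ : MemLp Z 2 P) (t : ℝ) :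
    Integrable (fun ω => max (Z ω - t) 0 ^ 2) P :=
  (hZ.sub (memLp_const t)).pos_part.integrable_sq

theorem ConvexOrderLE.integral_sq_max_sub_eq (hXY : ConvexOrderLE P X Y) (hm : 0 < m)
    (hψ : StrongConvexOn univ m ψ) (hψX : Integrable (fun ω => ψ (X ω)) P)
    (hψY : Integrable (fun ω => ψ (Y ω)) P) (heq : ∫ ω, ψ (X ω) ∂P = ∫ ω, ψ (Y ω) ∂P)
    (hX : MemLp X 2 P) (hY : MemLp Y 2 P) (t : ℝ) :
    ∫ ω, max (X ω - t) 0 ^ 2 ∂P = ∫ ω, max (Y ω - t) 0 ^ 2 ∂P := by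
  have hφ : ConvexOn ℝ univ fun x : ℝ => m / 2 * max (x - t) 0 ^ 2 :=
    ((convexOn_id convex_univ).sub (concaveOn_const t convex_univ)).sq_max_zero.smul
      (by positivity)
  have h := hXY.integral_comp_eq_of_convexOn_sub hφ (hψ.convexOn_sub_sq_max_sub hm.le t) hψX hψY
    ((integrable_sq_max_sub hX t).const_mul _) ((integrable_sq_max_sub hY t).const_mul _) heq
  rw [integral_const_mul, integral_const_mul] at h
  exact mul_left_cancel₀ (by positivity) h

end

noncomputable def quadraticRamp (t h x : ℝ) : ℝ :=
  (max (x - (t - 2 * h)) 0 ^ 2 - 2 * max (x - (t - h)) 0 ^ 2 + max (x - t) 0 ^ 2) / (2 * h ^ 2)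

section

variable {t h x : ℝ}

theorem quadraticRamp_eq_zero_of_le (hh : 0 ≤ h) (hx : x ≤ t - 2 * h) :
    quadraticRamp t h x = 0 := by
  simp [quadraticRamp, hx, show x ≤ t - h by linarith, show x ≤ t by linarith]

theorem quadraticRamp_eq_one_of_le (hh : 0 < h) (hx : t ≤ x) : quadraticRamp t h x = 1 := by
  rw [quadraticRamp, max_eq_left (by linarith), max_eq_left (by linarith),
    max_eq_left (by linarith), div_eq_one_iff_eq (by positivity)]
  ring

theorem quadraticRamp_mem_Icc (hh : 0 < h) (x : ℝ) : quadraticRamp t h x ∈ Icc 0 1 := by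
  rcases le_total t x with htx | hxt
  · simp [quadraticRamp_eq_one_of_le hh htx]
  rcases le_total x (t - 2 * h) with hx | hx
  · simp [quadraticRamp_eq_zero_of_le hh.le hx]
  rw [quadraticRamp, mem_Icc, le_div_iff₀ (by positivity), div_le_iff₀ (by positivity),
    max_eq_left (by linarith), max_eq_right (by linarith : x - t ≤ 0)]
  rcases le_total x (t - h) with hx' | hx'
  · rw [max_eq_right (by linarith)]
    constructor <;> nlinarith
  · rw [max_eq_left (by linarith)]
    constructor <;> nlinarith

theorem tendsto_quadraticRamp (t x : ℝ) :
    Tendsto (fun h => quadraticRamp t h x) (𝓝[>] 0) (𝓝 ((Ici t).indicator 1 x)) := by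
  rcases le_or_gt t x with htx | hxt
  · rw [indicator_of_mem (mem_Ici.2 htx)]
    refine tendsto_const_nhds.congr' ?_
    filter_upwards [self_mem_nhdsWithin] with h hh
    exact (quadraticRamp_eq_one_of_le hh htx).symm
  · rw [indicator_of_notMem (notMem_Ici.2 hxt)]
    refine tendsto_const_nhds.congr' ?_
    filter_upwards [self_mem_nhdsWithin, Ioo_mem_nhdsGT (half_pos (sub_pos.2 hxt))] with h hh hh'
    exact (quadraticRamp_eq_zero_of_le (le_of_lt hh) (by linarith [hh'.2])).symm

end

theorem tendsto_integral_quadraticRamp (μ : Measure ℝ) [IsFiniteMeasure μ] (t : ℝ) :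
    Tendsto (fun h => ∫ x, quadraticRamp t h x ∂μ) (𝓝[>] 0) (𝓝 (μ.real (Ici t))) := by
  rw [← integral_indicator_one measurableSet_Ici]
  refine tendsto_integral_filter_of_dominated_convergence 1 ?_ ?_ (integrable_const 1)
    (ae_of_all _ (tendsto_quadraticRamp t))
  · exact Eventually.of_forall fun h => by unfold quadraticRamp; fun_prop
  · filter_upwards [self_mem_nhdsWithin] with h hh
    refine ae_of_all _ fun x => ?_
    obtain ⟨h0, h1⟩ := quadraticRamp_mem_Icc hh x
    rwa [Real.norm_eq_abs, abs_of_nonneg h0]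

theorem integral_quadraticRamp {μ : Measure ℝ} (hμ : ∀ s, Integrable (fun x => max (x - s) 0 ^ 2) μ)
    (t h : ℝ) : ∫ x, quadraticRamp t h x ∂μ =
      (∫ x, max (x - (t - 2 * h)) 0 ^ 2 ∂μ - 2 * ∫ x, max (x - (t - h)) 0 ^ 2 ∂μ
        + ∫ x, max (x - t) 0 ^ 2 ∂μ) / (2 * h ^ 2) := by
  unfold quadraticRamp
  rw [integral_div, integral_add _ (hμ t), integral_sub (hμ _) ((hμ _).const_mul 2),
    integral_const_mul]
  exact (hμ _).sub ((hμ _).const_mul 2)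

theorem Measure.ext_of_integral_sq_max_sub_eq {μ ν : Measure ℝ} [IsFiniteMeasure μ]
    [IsFiniteMeasure ν] (hμ : ∀ t, Integrable (fun x => max (x - t) 0 ^ 2) μ)
    (hν : ∀ t, Integrable (fun x => max (x - t) 0 ^ 2) ν)
    (h : ∀ t, ∫ x, max (x - t) 0 ^ 2 ∂μ = ∫ x, max (x - t) 0 ^ 2 ∂ν) : μ = ν := by
  refine Measure.ext_of_Ici μ ν fun t => (measureReal_eq_measureReal_iff).1 ?_
  refine tendsto_nhds_unique (tendsto_integral_quadraticRamp μ t) ?_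
  simpa only [integral_quadraticRamp hμ, integral_quadraticRamp hν, h]
    using tendsto_integral_quadraticRamp ν t

/-- If `X ≤_cvx Y` (convex order) and `E[ψ(X)] = E[ψ(Y)]` for some strongly convex `ψ`,
then `X` and `Y` have the same distribution. -/
theorem convex_order_eq_of_strongConvex
    {Ω : Type*} [MeasurableSpace Ω] (P : Measure Ω) [IsProbabilityMeasure P]
    (X Y : Ω → ℝ) (hX : Measurable X) (hY : Measurable Y)
    (hcvx : ∀ ψ : ℝ → ℝ, ConvexOn ℝ Set.univ ψ →
      Integrable (fun ω => ψ (X ω)) P → Integrable (fun ω => ψ (Y ω)) P →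
      ∫ ω, ψ (X ω) ∂P ≤ ∫ ω, ψ (Y ω) ∂P)
    (ψ : ℝ → ℝ) (m : ℝ) (hm : 0 < m) (hψ : StrongConvexOn Set.univ m ψ)
    (hIX : Integrable (fun ω => ψ (X ω)) P) (hIY : Integrable (fun ω => ψ (Y ω)) P)
    (heq : ∫ ω, ψ (X ω) ∂P = ∫ ω, ψ (Y ω) ∂P) :
    Measure.map X P = Measure.map Y P := by
  have hX2 := hψ.memLp_two_of_integrable_comp hm hX.aestronglyMeasurable hIX
  have hY2 := hψ.memLp_two_of_integrable_comp hm hY.aestronglyMeasurable hIY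
  have hcont (t : ℝ) : Continuous fun x : ℝ => max (x - t) 0 ^ 2 := by fun_prop
  have hint {Z : Ω → ℝ} (hZ : Measurable Z) (hZ2 : MemLp Z 2 P) (t : ℝ) :
      Integrable (fun x => max (x - t) 0 ^ 2) (P.map Z) :=
    (integrable_map_measure (hcont t).aestronglyMeasurable hZ.aemeasurable).2
      (integrable_sq_max_sub hZ2 t)
  refine Measure.ext_of_integral_sq_max_sub_eq (hint hX hX2) (hint hY hY2) fun t => ?_
  rw [integral_map hX.aemeasurable (hcont t).aestronglyMeasurable,
    integral_map hY.aemeasurable (hcont t).aestronglyMeasurable]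
  exact ConvexOrderLE.integral_sq_max_sub_eq hcvx hm hψ hIX hIY heq hX2 hY2 t
end

section
/- Let X ~ Beta(α, β) and X' ~ Beta(α', β') with α < α', β < β', and α/(α+β) = α'/(α'+β'). Then X' is smaller than X in the convex order: for every convex function ψ: [0,1] → ℝ, E[ψ(X')] ≤ E[ψ(X)]. -/
/-!
The ratio of the Beta(α', β') density to the Beta(α, β) density is a constant times
`x ^ (α' - α) * (1 - x) ^ (β' - β)`, which is log-concave on `(0, 1)`; hence the set where the
second density dominates is an interval, with endpoints `a ≠ b` because both densities have total
mass one. If `L` is the secant of `ψ` through `a` and `b`, then `ψ - L` is `≤ 0` on `[a, b]` and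
`≥ 0` outside it, exactly like the difference of the densities, so
`∫ (ψ - L) (f - f') ≥ 0`. Since `L` is affine and the two distributions have equal mass and equal
mean, the `L`-terms cancel, leaving `∫ ψ f' ≤ ∫ ψ f` (the Karlin–Novikoff cut criterion).
-/

open MeasureTheory

/-- The Beta(α,β) distribution on [0,1]. -/
noncomputable def betaMeasure (a b : ℝ) : Measure ℝ :=
  (volume.restrict (Set.Ioo (0:ℝ) 1)).withDensity
    (fun x => ENNReal.ofReal (x ^ (a - 1) * (1 - x) ^ (b - 1) /
      (Real.Gamma a * Real.Gamma b / Real.Gamma (a + b))))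

open Set

theorem ConvexOn.mul_sub_secant_nonneg {s : Set ℝ} {ψ : ℝ → ℝ} (hψ : ConvexOn ℝ s ψ)
    {a b x : ℝ} (ha : a ∈ s) (hb : b ∈ s) (hx : x ∈ s) (hab : a ≠ b) :
    0 ≤ (x - a) * (x - b) * (ψ x - (ψ a + slope ψ a b * (x - a))) := by
  rcases eq_or_ne x a with rfl | hxa
  · simp
  have hslope : ψ x - (ψ a + slope ψ a b * (x - a)) = (x - a) * (slope ψ a x - slope ψ a b) := by
    rw [slope_def_field, slope_def_field]
    field_simp [sub_ne_zero.2 hxa]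
    ring
  have hmono : 0 ≤ (x - b) * (slope ψ a x - slope ψ a b) := by
    have hmem : ∀ {y}, y ∈ s → y ≠ a → y ∈ s \ {a} := fun hy hya => ⟨hy, hya⟩
    rcases le_total x b with hxb | hbx
    · exact mul_nonneg_of_nonpos_of_nonpos (sub_nonpos.2 hxb)
        (sub_nonpos.2 (hψ.slope_mono ha (hmem hx hxa) (hmem hb hab.symm) hxb))
    · exact mul_nonneg (sub_nonneg.2 hbx)
        (sub_nonneg.2 (hψ.slope_mono ha (hmem hb hab.symm) (hmem hx hxa) hbx))
  rw [hslope]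
  nlinarith [sq_nonneg (x - a)]

theorem ConvexOn.exists_abs_le_of_Icc {l r : ℝ} {ψ : ℝ → ℝ} (hψ : ConvexOn ℝ (Icc l r) ψ) :
    ∃ C, ∀ x ∈ Icc l r, |ψ x| ≤ C := by
  refine ⟨|ψ l| + |ψ r| + 2 * |ψ ((l + r) / 2)|, fun x hx => ?_⟩
  have hl : l ∈ Icc l r := left_mem_Icc.2 (hx.1.trans hx.2)
  have hr : r ∈ Icc l r := right_mem_Icc.2 (hx.1.trans hx.2)
  have hx' : l + r - x ∈ Icc l r := ⟨by linarith [hx.2], by linarith [hx.1]⟩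
  have hupper : ∀ y ∈ Icc l r, ψ y ≤ |ψ l| + |ψ r| := fun y hy =>
    (hψ.le_max_of_mem_Icc hl hr hy).trans
      (max_le (by linarith [le_abs_self (ψ l), abs_nonneg (ψ r)])
        (by linarith [le_abs_self (ψ r), abs_nonneg (ψ l)]))
  have hmid := hψ.2 hx hx' (by norm_num : (0 : ℝ) ≤ 1 / 2) (by norm_num : (0 : ℝ) ≤ 1 / 2)
    (by norm_num)
  rw [smul_eq_mul, smul_eq_mul, smul_eq_mul, smul_eq_mul,
    show 1 / 2 * x + 1 / 2 * (l + r - x) = (l + r) / 2 by ring] at hmid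
  rw [abs_le]
  constructor
  · linarith [hupper _ hx', neg_abs_le (ψ ((l + r) / 2))]
  · linarith [hupper x hx, abs_nonneg (ψ ((l + r) / 2))]

theorem ConvexOn.integrableOn_Ioo_mul {l r : ℝ} {ψ f : ℝ → ℝ} {μ : Measure ℝ}
    (hψ : ConvexOn ℝ (Icc l r) ψ) (hf : IntegrableOn f (Ioo l r) μ) :
    IntegrableOn (fun x => f x * ψ x) (Ioo l r) μ := by
  obtain ⟨C, hC⟩ := hψ.exists_abs_le_of_Icc
  have hcont : ContinuousOn ψ (Ioo l r) := by
    simpa only [interior_Icc] using hψ.continuousOn_interior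
  refine hf.mul_bdd (c := C) (hcont.aestronglyMeasurable measurableSet_Ioo) ?_
  filter_upwards [ae_restrict_mem measurableSet_Ioo] with x hx
  exact hC x (Ioo_subset_Icc_self hx)

theorem concaveOn_log_one_sub : ConcaveOn ℝ (Iio 1) fun x => Real.log (1 - x) := by
  have h := strictConcaveOn_log_Ioi.concaveOn.comp_affineMap
    (AffineMap.const ℝ ℝ (1 : ℝ) - AffineMap.id ℝ ℝ)
  have hs : (AffineMap.const ℝ ℝ (1 : ℝ) - AffineMap.id ℝ ℝ) ⁻¹' Ioi 0 = Iio 1 := by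
    ext x; simp
  rw [hs] at h
  exact h.congr fun x _ => by simp

theorem integral_mul_le_of_mul_sub_nonneg {μ : Measure ℝ} {s : Set ℝ} {f g ψ : ℝ → ℝ}
    (hψ : ConvexOn ℝ s ψ) {a b : ℝ} (ha : a ∈ s) (hb : b ∈ s) (hab : a ≠ b)
    (hsign : ∀ᵐ x ∂μ, x ∈ s ∧ 0 ≤ (x - a) * (x - b) * (f x - g x))
    (hf : Integrable f μ) (hg : Integrable g μ)
    (hfx : Integrable (fun x => f x * x) μ) (hgx : Integrable (fun x => g x * x) μ)
    (hfψ : Integrable (fun x => f x * ψ x) μ) (hgψ : Integrable (fun x => g x * ψ x) μ)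
    (hmass : ∫ x, f x ∂μ = ∫ x, g x ∂μ) (hmean : ∫ x, f x * x ∂μ = ∫ x, g x * x ∂μ) :
    ∫ x, g x * ψ x ∂μ ≤ ∫ x, f x * ψ x ∂μ := by
  set k := slope ψ a b
  set c := ψ a - k * a
  have hsecant : ∀ x, ψ a + k * (x - a) = c + k * x := fun x => by ring
  have hsecant_b : c + k * b = ψ b := by
    rw [← hsecant, show k = (ψ b - ψ a) / (b - a) from slope_def_field ψ a b]
    field_simp [sub_ne_zero.2 hab.symm]
    ring
  have hpt : ∀ᵐ x ∂μ, 0 ≤ (f x - g x) * (ψ x - (c + k * x)) := by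
    filter_upwards [hsign] with x ⟨hx, hfg⟩
    have hψx := hψ.mul_sub_secant_nonneg ha hb hx hab
    rw [hsecant] at hψx
    by_cases hc : (x - a) * (x - b) = 0
    · rcases mul_eq_zero.1 hc with h | h
      · rw [sub_eq_zero.1 h, ← hsecant, sub_self, mul_zero, add_zero, sub_self, mul_zero]
      · rw [sub_eq_zero.1 h, hsecant_b, sub_self, mul_zero]
    · have hc2 : 0 < ((x - a) * (x - b)) ^ 2 := by positivity
      refine (mul_nonneg_iff_of_pos_right hc2).1 ?_
      linear_combination mul_nonneg hfg hψx
  have hfg : Integrable (fun x => f x - g x) μ := hf.sub hg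
  have hfgx : Integrable (fun x => f x * x - g x * x) μ := hfx.sub hgx
  have hfgψ : Integrable (fun x => f x * ψ x - g x * ψ x) μ := hfψ.sub hgψ
  have hlin : Integrable (fun x => c * (f x - g x) + k * (f x * x - g x * x)) μ :=
    (hfg.const_mul c).add (hfgx.const_mul k)
  have hexpand : ∫ x, (f x - g x) * (ψ x - (c + k * x)) ∂μ
      = ∫ x, f x * ψ x ∂μ - ∫ x, g x * ψ x ∂μ := by
    have : (fun x => (f x - g x) * (ψ x - (c + k * x)))
        = fun x => (f x * ψ x - g x * ψ x) - (c * (f x - g x) + k * (f x * x - g x * x)) := by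
      funext x; ring
    rw [this, integral_sub hfgψ hlin, integral_add (hfg.const_mul c) (hfgx.const_mul k),
      integral_const_mul, integral_const_mul, integral_sub hf hg, integral_sub hfx hgx,
      integral_sub hfψ hgψ, hmass, hmean]
    ring
  linarith [integral_nonneg_of_ae hpt]

theorem exists_mul_sub_nonneg_of_convex_setOf_le {l r : ℝ} (hlr : l < r) {f g : ℝ → ℝ}
    (hf : IntegrableOn f (Ioo l r)) (hg : IntegrableOn g (Ioo l r))
    (hfg : ∫ x in Ioo l r, f x = ∫ x in Ioo l r, g x)
    (hS : Convex ℝ {x ∈ Ioo l r | f x ≤ g x}) :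
    ∃ a ∈ Icc l r, ∃ b ∈ Icc l r, a ≠ b ∧
      ∀ x ∈ Ioo l r, 0 ≤ (x - a) * (x - b) * (f x - g x) := by
  set S := {x ∈ Ioo l r | f x ≤ g x}
  have hSnt : S.Nontrivial := by
    by_contra hS1
    rw [Set.not_nontrivial_iff] at hS1
    have hpos : ∀ᵐ x ∂volume.restrict (Ioo l r), 0 < f x - g x := by
      filter_upwards [ae_restrict_mem measurableSet_Ioo,
        ae_restrict_of_ae (measure_eq_zero_iff_ae_notMem.1 (hS1.measure_zero volume))]
        with x hx hxS
      exact sub_pos.2 (not_le.1 fun h => hxS ⟨hx, h⟩)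
    have hzero : (fun x => f x - g x) =ᵐ[volume.restrict (Ioo l r)] 0 :=
      (integral_eq_zero_iff_of_nonneg_ae (hpos.mono fun _ => le_of_lt) (hf.sub hg)).1
        (by rw [integral_sub hf hg, hfg, sub_self])
    have hfalse : ∀ᵐ _ ∂volume.restrict (Ioo l r), False := by
      filter_upwards [hpos, hzero] with x h1 h2
      exact h1.ne' h2
    rw [Filter.eventually_false_iff_eq_bot, ae_eq_bot, Measure.restrict_eq_zero,
      Real.volume_Ioo, ENNReal.ofReal_eq_zero] at hfalse
    linarith
  have hbdd : Bornology.IsBounded S := Metric.isBounded_Ioo l r |>.subset fun x hx => hx.1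
  have hIoo : Ioo (sInf S) (sSup S) ⊆ S :=
    IsConnected.Ioo_csInf_csSup_subset ⟨hSnt.nonempty, hS.isPreconnected⟩ hbdd.bddBelow
      hbdd.bddAbove
  have hIcc : S ⊆ Icc (sInf S) (sSup S) := subset_Icc_csInf_csSup hbdd.bddBelow hbdd.bddAbove
  have hsub : Icc (sInf S) (sSup S) ⊆ Icc l r :=
    Icc_subset_Icc (le_csInf hSnt.nonempty fun y hy => hy.1.1.le)
      (csSup_le hSnt.nonempty fun y hy => hy.1.2.le)
  obtain ⟨u, hu, v, hv, huv⟩ := hSnt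
  have hab : sInf S < sSup S := by
    rcases huv.lt_or_gt with h | h
    · exact (hIcc hu).1.trans_lt (h.trans_le (hIcc hv).2)
    · exact (hIcc hv).1.trans_lt (h.trans_le (hIcc hu).2)
  refine ⟨sInf S, hsub (left_mem_Icc.2 hab.le), sSup S, hsub (right_mem_Icc.2 hab.le), hab.ne,
    fun x hx => ?_⟩
  by_cases hxS : x ∈ S
  · exact mul_nonneg_of_nonpos_of_nonpos
      (mul_nonpos_of_nonneg_of_nonpos (sub_nonneg.2 (hIcc hxS).1) (sub_nonpos.2 (hIcc hxS).2))
      (sub_nonpos.2 hxS.2)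
  · have hgf : g x < f x := not_le.1 fun h => hxS ⟨hx, h⟩
    have hout : x ∉ Ioo (sInf S) (sSup S) := fun h => hxS (hIoo h)
    rw [mem_Ioo, not_and_or, not_lt, not_lt] at hout
    refine mul_nonneg ?_ (sub_nonneg.2 hgf.le)
    rcases hout with h | h
    · exact mul_nonneg_of_nonpos_of_nonpos (by linarith) (by linarith)
    · exact mul_nonneg (by linarith) (by linarith)

noncomputable def betaDensity (a b x : ℝ) : ℝ :=
  x ^ (a - 1) * (1 - x) ^ (b - 1) / ProbabilityTheory.beta a b

section BetaDensity

variable {a b x : ℝ}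

@[fun_prop]
theorem measurable_betaDensity (a b : ℝ) : Measurable (betaDensity a b) := by
  unfold betaDensity; fun_prop

theorem betaDensity_pos (ha : 0 < a) (hb : 0 < b) (hx : x ∈ Ioo 0 1) : 0 < betaDensity a b x :=
  div_pos (mul_pos (Real.rpow_pos_of_pos hx.1 _) (Real.rpow_pos_of_pos (sub_pos.2 hx.2) _))
    (ProbabilityTheory.beta_pos ha hb)

theorem lintegral_betaDensity (ha : 0 < a) (hb : 0 < b) :
    ∫⁻ x in Ioo 0 1, ENNReal.ofReal (betaDensity a b x) = 1 := by
  rw [← ProbabilityTheory.lintegral_betaPDF_eq_one ha hb, ProbabilityTheory.lintegral_betaPDF]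
  simp only [betaDensity, one_div_mul_eq_div, mul_div_right_comm]

theorem integrableOn_betaDensity (ha : 0 < a) (hb : 0 < b) :
    IntegrableOn (betaDensity a b) (Ioo 0 1) := by
  refine ⟨(measurable_betaDensity a b).aestronglyMeasurable, ?_⟩
  rw [hasFiniteIntegral_iff_ofReal, lintegral_betaDensity ha hb]
  · exact ENNReal.one_lt_top
  · filter_upwards [ae_restrict_mem measurableSet_Ioo] with x hx
    exact (betaDensity_pos ha hb hx).le

theorem integral_betaDensity (ha : 0 < a) (hb : 0 < b) :
    ∫ x in Ioo 0 1, betaDensity a b x = 1 := by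
  rw [integral_eq_lintegral_of_nonneg_ae _ (measurable_betaDensity a b).aestronglyMeasurable,
    lintegral_betaDensity ha hb, ENNReal.toReal_one]
  filter_upwards [ae_restrict_mem measurableSet_Ioo] with x hx
  exact (betaDensity_pos ha hb hx).le

theorem beta_add_one_left (ha : 0 < a) (hb : 0 < b) :
    ProbabilityTheory.beta (a + 1) b = a / (a + b) * ProbabilityTheory.beta a b := by
  have hG : Real.Gamma (a + b) ≠ 0 := (Real.Gamma_pos_of_pos (add_pos ha hb)).ne'
  rw [ProbabilityTheory.beta, ProbabilityTheory.beta, add_right_comm,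
    Real.Gamma_add_one ha.ne', Real.Gamma_add_one (add_pos ha hb).ne']
  field_simp

theorem betaDensity_mul_self (ha : 0 < a) (hb : 0 < b) (hx : 0 < x) :
    betaDensity a b x * x = a / (a + b) * betaDensity (a + 1) b x := by
  have hab : a / (a + b) ≠ 0 := (div_pos ha (add_pos ha hb)).ne'
  have hB : ProbabilityTheory.beta a b ≠ 0 := (ProbabilityTheory.beta_pos ha hb).ne'
  rw [betaDensity, betaDensity, beta_add_one_left ha hb, add_sub_cancel_right,
    Real.rpow_sub_one hx.ne']
  field_simp

theorem integral_betaDensity_mul_self (ha : 0 < a) (hb : 0 < b) :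
    ∫ x in Ioo 0 1, betaDensity a b x * x = a / (a + b) := by
  rw [setIntegral_congr_fun measurableSet_Ioo fun x hx => betaDensity_mul_self ha hb hx.1,
    integral_const_mul, integral_betaDensity (by linarith) hb, mul_one]

theorem log_betaDensity (ha : 0 < a) (hb : 0 < b) (hx : x ∈ Ioo 0 1) :
    Real.log (betaDensity a b x) = (a - 1) * Real.log x + (b - 1) * Real.log (1 - x) -
      Real.log (ProbabilityTheory.beta a b) := by
  have hx0 : 0 < x := hx.1
  have h1x : 0 < 1 - x := sub_pos.2 hx.2
  rw [betaDensity, Real.log_div (by positivity) (ProbabilityTheory.beta_pos ha hb).ne',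
    Real.log_mul (by positivity) (by positivity), Real.log_rpow hx0, Real.log_rpow h1x]

theorem integral_betaMeasure (ha : 0 < a) (hb : 0 < b) (ψ : ℝ → ℝ) :
    ∫ x, ψ x ∂betaMeasure a b = ∫ x in Ioo 0 1, betaDensity a b x * ψ x := by
  change ∫ x, ψ x ∂(volume.restrict (Ioo 0 1)).withDensity
    (fun x => ENNReal.ofReal (betaDensity a b x)) = _
  rw [integral_withDensity_eq_integral_toReal_smul (measurable_betaDensity a b).ennreal_ofReal
    (ae_of_all _ fun _ => ENNReal.ofReal_lt_top)]
  refine setIntegral_congr_fun measurableSet_Ioo fun x hx => ?_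
  rw [ENNReal.toReal_ofReal (betaDensity_pos ha hb hx).le, smul_eq_mul]

end BetaDensity

theorem convex_setOf_betaDensity_le {α β α' β' : ℝ} (hα : 0 < α) (hβ : 0 < β) (hα' : 0 < α')
    (hβ' : 0 < β') (h1 : α ≤ α') (h2 : β ≤ β') :
    Convex ℝ {x ∈ Ioo 0 1 | betaDensity α β x ≤ betaDensity α' β' x} := by
  have hconc : ConcaveOn ℝ (Ioo 0 1)
      fun x => (α' - α) * Real.log x + (β' - β) * Real.log (1 - x) :=
    ((strictConcaveOn_log_Ioi.concaveOn.subset Ioo_subset_Ioi_self (convex_Ioo 0 1)).smul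
      (sub_nonneg.2 h1)).add
    ((concaveOn_log_one_sub.subset Ioo_subset_Iio_self (convex_Ioo 0 1)).smul (sub_nonneg.2 h2))
  -- on `(0, 1)` the log-ratio of the two densities is this concave function plus a constant
  convert hconc.convex_ge
    (Real.log (ProbabilityTheory.beta α' β') - Real.log (ProbabilityTheory.beta α β)) using 1
  refine Set.ext fun x => and_congr_right fun hx => ?_
  rw [← Real.log_le_log_iff (betaDensity_pos hα hβ hx) (betaDensity_pos hα' hβ' hx),
    log_betaDensity hα hβ hx, log_betaDensity hα' hβ' hx]
  constructor <;> intro h <;> linarith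

/-- If `α < α'`, `β < β'` and the means agree, then `Beta(α',β') ≤_cvx Beta(α,β)`. -/
theorem beta_convex_order (α β α' β' : ℝ) (hα : 0 < α) (hβ : 0 < β)
    (hα' : 0 < α') (hβ' : 0 < β') (h1 : α < α') (h2 : β < β')
    (hmean : α / (α + β) = α' / (α' + β'))
    (ψ : ℝ → ℝ) (hψ : ConvexOn ℝ (Set.Icc 0 1) ψ) :
    ∫ x, ψ x ∂(betaMeasure α' β') ≤ ∫ x, ψ x ∂(betaMeasure α β) := by
  have hf := integrableOn_betaDensity hα hβ
  have hg := integrableOn_betaDensity hα' hβ'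
  obtain ⟨a, ha, b, hb, hab, hsign⟩ := exists_mul_sub_nonneg_of_convex_setOf_le zero_lt_one hf hg
    (by rw [integral_betaDensity hα hβ, integral_betaDensity hα' hβ'])
    (convex_setOf_betaDensity_le hα hβ hα' hβ' h1.le h2.le)
  have hid : ConvexOn ℝ (Icc (0 : ℝ) 1) fun x => x := convexOn_id (convex_Icc 0 1)
  rw [integral_betaMeasure hα' hβ', integral_betaMeasure hα hβ]
  refine integral_mul_le_of_mul_sub_nonneg hψ ha hb hab ?_ hf hg (hid.integrableOn_Ioo_mul hf)
    (hid.integrableOn_Ioo_mul hg) (hψ.integrableOn_Ioo_mul hf) (hψ.integrableOn_Ioo_mul hg)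
    (by rw [integral_betaDensity hα hβ, integral_betaDensity hα' hβ'])
    (by rw [integral_betaDensity_mul_self hα hβ, integral_betaDensity_mul_self hα' hβ', hmean])
  filter_upwards [ae_restrict_mem measurableSet_Ioo] with x hx
  exact ⟨Ioo_subset_Icc_self hx, hsign x hx⟩
end

section
/- Two real random variables X, Y with E[X] = E[Y] satisfy X ≤_cvx Y (i.e., E[ψ(X)] ≤ E[ψ(Y)] for all convex ψ such that the expectations exist) if and only if for all x ∈ ℝ, ∫_{-∞}^x F_X(t) dt ≤ ∫_{-∞}^x F_Y(t) dt < ∞, where F_X, F_Y are the cumulative distribution functions of X and Y. -/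
/-!
A hinge `u ↦ (x - u)⁺` is convex, and by Tonelli `∫_{-∞}^x F_Z = E (x - Z)⁺`; this gives the
forward direction. Conversely, the inequality `E f(X) ≤ E f(Y)` is stable under sums and
nonnegative multiples, and holds for affine `f` (equal means) and for hinges (hypothesis). The
maximum of finitely many support lines of a convex `ψ` lies in this cone: adding a support line to
the left of all previous ones adds the positive part of an affine function of nonpositive slope,
i.e. a multiple of a hinge. The maxima of the support lines at the first `n` rationals increase
to `ψ`, and monotone convergence concludes.
-/

open MeasureTheory ProbabilityTheory Set Filter Topology

noncomputable def supportLine (ψ : ℝ → ℝ) (a u : ℝ) : ℝ :=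
  ψ a + derivWithin ψ (Ioi a) a * (u - a)

namespace ConvexOn

variable {ψ : ℝ → ℝ}

lemma supportLine_le (hψ : ConvexOn ℝ univ ψ) (a u : ℝ) : supportLine ψ a u ≤ ψ u := by
  have hint : a ∈ interior (univ : Set ℝ) := by simp
  rcases lt_trichotomy u a with hua | rfl | hau
  · have h := (hψ.slope_le_leftDeriv_of_mem_interior (mem_univ u) hint hua).trans
      (hψ.leftDeriv_le_rightDeriv_of_mem_interior hint)
    rw [slope_def_field, div_le_iff₀ (by linarith)] at h
    unfold supportLine; linarith
  · simp [supportLine]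
  · have h := hψ.rightDeriv_le_slope_of_mem_interior hint (mem_univ u) hau
    rw [slope_def_field, le_div_iff₀ (by linarith)] at h
    unfold supportLine; linarith

lemma rightDeriv_mono (hψ : ConvexOn ℝ univ ψ) :
    Monotone fun a => derivWithin ψ (Ioi a) a := by
  simpa using hψ.monotoneOn_rightDeriv

lemma sub_mul_le_supportLine (hψ : ConvexOn ℝ univ ψ) {u q : ℝ} :
    ψ u - (derivWithin ψ (Ioi q) q - derivWithin ψ (Ioi u) u) * (q - u) ≤ supportLine ψ q u := by
  have h := hψ.supportLine_le u q
  unfold supportLine at *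
  linarith

lemma supportLine_le_supportLine_of_le_of_le (hψ : ConvexOn ℝ univ ψ) {a b u : ℝ}
    (hab : a ≤ b) (hbu : b ≤ u) : supportLine ψ a u ≤ supportLine ψ b u := by
  have h1 := hψ.supportLine_le a b
  have h2 := hψ.rightDeriv_mono hab
  unfold supportLine at *
  nlinarith

lemma supportLine_le_supportLine_of_le_of_ge (hψ : ConvexOn ℝ univ ψ) {a b u : ℝ}
    (hab : a ≤ b) (hua : u ≤ a) : supportLine ψ b u ≤ supportLine ψ a u := by
  have h1 := hψ.supportLine_le b a
  have h2 := hψ.rightDeriv_mono hab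
  unfold supportLine at *
  nlinarith

lemma sup'_insert_supportLine (hψ : ConvexOn ℝ univ ψ) {S : Finset ℝ} (hS : S.Nonempty) {a : ℝ}
    (ha : ∀ c ∈ S, a < c) (u : ℝ) :
    (insert a S).sup' (S.insert_nonempty a) (fun c => supportLine ψ c u) =
      S.sup' hS (fun c => supportLine ψ c u) +
        max (supportLine ψ a u - supportLine ψ (S.min' hS) u) 0 := by
  set b := S.min' hS
  have hab : a ≤ b := (ha b (S.min'_mem hS)).le
  have hb_le : supportLine ψ b u ≤ S.sup' hS (fun c => supportLine ψ c u) :=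
    Finset.le_sup' (fun c => supportLine ψ c u) (S.min'_mem hS)
  rw [Finset.sup'_insert (H := hS)]
  rcases le_total u b with hub | hbu
  · have hsup : S.sup' hS (fun c => supportLine ψ c u) = supportLine ψ b u :=
      le_antisymm (Finset.sup'_le _ _ fun c hc =>
        hψ.supportLine_le_supportLine_of_le_of_ge (S.min'_le c hc) hub) hb_le
    rw [hsup]
    rcases le_total (supportLine ψ a u) (supportLine ψ b u) with h | h <;> simp [h]
  · have h := hψ.supportLine_le_supportLine_of_le_of_le hab hbu
    rw [sup_eq_right.2 (h.trans hb_le), max_eq_right (by linarith), add_zero]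

end ConvexOn

noncomputable def ratGrid (n : ℕ) : Finset ℝ :=
  (Finset.range (n + 1)).image fun k => (((Denumerable.eqv ℚ).symm k : ℚ) : ℝ)

lemma ratGrid_nonempty (n : ℕ) : (ratGrid n).Nonempty :=
  Finset.Nonempty.image Finset.nonempty_range_add_one _

lemma ratGrid_mono : Monotone ratGrid := fun _ _ hmn =>
  Finset.image_subset_image (Finset.range_subset_range.2 (Nat.succ_le_succ hmn))

lemma cast_mem_ratGrid (q : ℚ) : (q : ℝ) ∈ ratGrid (Denumerable.eqv ℚ q) :=
  Finset.mem_image.2 ⟨_, Finset.self_mem_range_succ _, by rw [Equiv.symm_apply_apply]⟩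

lemma monotone_sup'_supportLine_ratGrid (ψ : ℝ → ℝ) (u : ℝ) :
    Monotone fun n => (ratGrid n).sup' (ratGrid_nonempty n) (fun c => supportLine ψ c u) :=
  fun _ _ hmn => Finset.sup'_mono _ (ratGrid_mono hmn) _

lemma ConvexOn.tendsto_sup'_supportLine_ratGrid {ψ : ℝ → ℝ} (hψ : ConvexOn ℝ univ ψ) (u : ℝ) :
    Tendsto (fun n => (ratGrid n).sup' (ratGrid_nonempty n) (fun c => supportLine ψ c u))
      atTop (𝓝 (ψ u)) := by
  refine tendsto_atTop_isLUB (monotone_sup'_supportLine_ratGrid ψ u) ⟨?_, fun b hb => ?_⟩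
  · rintro _ ⟨n, rfl⟩
    exact Finset.sup'_le _ _ fun c _ => hψ.supportLine_le c u
  set s := fun a => derivWithin ψ (Ioi a) a
  have hclose : ∀ δ ∈ Ioo (0 : ℝ) 1, ψ u - (s (u + 1) - s u) * δ ≤ b := by
    rintro δ ⟨hδ0, hδ1⟩
    obtain ⟨q, huq, hqu⟩ := exists_rat_btwn (lt_add_of_pos_right u hδ0)
    have hsq : s q - s u ≤ s (u + 1) - s u := by
      have := hψ.rightDeriv_mono (by linarith : (q : ℝ) ≤ u + 1); simp only [s]; linarith
    have hsq' : 0 ≤ s q - s u := sub_nonneg.2 (hψ.rightDeriv_mono huq.le)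
    calc ψ u - (s (u + 1) - s u) * δ ≤ ψ u - (s q - s u) * (q - u) := by
          gcongr ψ u - ?_
          exact mul_le_mul hsq (by linarith) (by linarith) (hsq'.trans hsq)
      _ ≤ supportLine ψ q u := hψ.sub_mul_le_supportLine
      _ ≤ b := (Finset.le_sup' (fun c => supportLine ψ c u) (cast_mem_ratGrid q)).trans
          (hb ⟨_, rfl⟩)
  have hlim : Tendsto (fun δ => ψ u - (s (u + 1) - s u) * δ) (𝓝[>] 0) (𝓝 (ψ u)) := by
    have h : Tendsto (fun δ => ψ u - (s (u + 1) - s u) * δ) (𝓝 0)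
        (𝓝 (ψ u - (s (u + 1) - s u) * 0)) :=
      tendsto_const_nhds.sub (tendsto_id.const_mul _)
    rw [mul_zero, sub_zero] at h
    exact h.mono_left nhdsWithin_le_nhds
  exact le_of_tendsto hlim (eventually_of_mem (Ioo_mem_nhdsGT one_pos) hclose)

section IntegralCompLE

variable {Ω : Type*} [MeasurableSpace Ω] {P : Measure Ω} {X Y : Ω → ℝ}

structure IntegralCompLE (P : Measure Ω) (X Y : Ω → ℝ) (f : ℝ → ℝ) : Prop where
  integrable_left : Integrable (fun ω => f (X ω)) P
  integrable_right : Integrable (fun ω => f (Y ω)) P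
  integral_le : ∫ ω, f (X ω) ∂P ≤ ∫ ω, f (Y ω) ∂P

namespace IntegralCompLE

variable {f g : ℝ → ℝ}

lemma add (hf : IntegralCompLE P X Y f) (hg : IntegralCompLE P X Y g) :
    IntegralCompLE P X Y (fun u => f u + g u) where
  integrable_left := hf.integrable_left.add hg.integrable_left
  integrable_right := hf.integrable_right.add hg.integrable_right
  integral_le := by
    rw [integral_add hf.integrable_left hg.integrable_left,
      integral_add hf.integrable_right hg.integrable_right]
    exact add_le_add hf.integral_le hg.integral_le

lemma const_mul (hf : IntegralCompLE P X Y f) {c : ℝ} (hc : 0 ≤ c) :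
    IntegralCompLE P X Y (fun u => c * f u) where
  integrable_left := hf.integrable_left.const_mul c
  integrable_right := hf.integrable_right.const_mul c
  integral_le := by
    rw [integral_const_mul, integral_const_mul]
    exact mul_le_mul_of_nonneg_left hf.integral_le hc

end IntegralCompLE

variable [IsFiniteMeasure P]

lemma integralCompLE_affine (hIX : Integrable X P) (hIY : Integrable Y P)
    (hmean : ∫ ω, X ω ∂P = ∫ ω, Y ω ∂P) (m β : ℝ) :
    IntegralCompLE P X Y (fun u => m * u + β) where
  integrable_left := (hIX.const_mul m).add (integrable_const β)
  integrable_right := (hIY.const_mul m).add (integrable_const β)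
  integral_le := by
    rw [integral_add (hIX.const_mul m) (integrable_const β),
      integral_add (hIY.const_mul m) (integrable_const β), integral_const_mul,
      integral_const_mul, hmean]

lemma integralCompLE_max_affine_zero (hIX : Integrable X P) (hIY : Integrable Y P)
    (hmean : ∫ ω, X ω ∂P = ∫ ω, Y ω ∂P)
    (hinge : ∀ t, IntegralCompLE P X Y (fun u => max (t - u) 0)) {m : ℝ} (hm : m ≤ 0) (β : ℝ) :
    IntegralCompLE P X Y (fun u => max (m * u + β) 0) := by
  rcases hm.lt_or_eq with hm | rfl
  · have h := (hinge (-β / m)).const_mul (neg_nonneg.2 hm.le)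
    convert h using 2 with u
    rw [mul_max_of_nonneg _ _ (neg_nonneg.2 hm.le), mul_zero]
    congr 1
    field_simp [hm.ne]
    ring
  · simpa using integralCompLE_affine hIX hIY hmean 0 (max β 0)

lemma ConvexOn.integralCompLE_sup'_supportLine {ψ : ℝ → ℝ} (hψ : ConvexOn ℝ univ ψ)
    (hIX : Integrable X P) (hIY : Integrable Y P) (hmean : ∫ ω, X ω ∂P = ∫ ω, Y ω ∂P)
    (hinge : ∀ t, IntegralCompLE P X Y (fun u => max (t - u) 0))
    (S : Finset ℝ) (hS : S.Nonempty) :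
    IntegralCompLE P X Y (fun u => S.sup' hS (fun c => supportLine ψ c u)) := by
  induction S using Finset.induction_on_min with
  | empty => exact absurd hS Finset.not_nonempty_empty
  | insert a S ha ih =>
    rcases S.eq_empty_or_nonempty with rfl | hS'
    · convert integralCompLE_affine hIX hIY hmean (derivWithin ψ (Ioi a) a)
        (ψ a - derivWithin ψ (Ioi a) a * a) using 2 with u
      simp only [insert_empty_eq, Finset.sup'_singleton, supportLine]
      ring
    · simp_rw [hψ.sup'_insert_supportLine hS' ha]
      refine (ih hS').add ?_
      convert integralCompLE_max_affine_zero hIX hIY hmean hinge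
        (sub_nonpos.2 (hψ.rightDeriv_mono (ha _ (S.min'_mem hS')).le))
        (ψ a - derivWithin ψ (Ioi a) a * a - (ψ (S.min' hS') -
          derivWithin ψ (Ioi (S.min' hS')) (S.min' hS') * S.min' hS')) using 3 with u
      simp only [supportLine]
      ring

theorem ConvexOn.integral_comp_le_of_hinge {ψ : ℝ → ℝ} (hψ : ConvexOn ℝ univ ψ)
    (hIX : Integrable X P) (hIY : Integrable Y P) (hmean : ∫ ω, X ω ∂P = ∫ ω, Y ω ∂P)
    (hinge : ∀ t, IntegralCompLE P X Y (fun u => max (t - u) 0))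
    (hψX : Integrable (fun ω => ψ (X ω)) P) (hψY : Integrable (fun ω => ψ (Y ω)) P) :
    ∫ ω, ψ (X ω) ∂P ≤ ∫ ω, ψ (Y ω) ∂P := by
  have happrox n :=
    hψ.integralCompLE_sup'_supportLine hIX hIY hmean hinge (ratGrid n) (ratGrid_nonempty n)
  have hlim {Z : Ω → ℝ} (hψZ : Integrable (fun ω => ψ (Z ω)) P)
      (hZ : ∀ n, Integrable (fun ω => (ratGrid n).sup' (ratGrid_nonempty n)
        (fun c => supportLine ψ c (Z ω))) P) :=
    integral_tendsto_of_tendsto_of_monotone hZ hψZ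
      (ae_of_all _ fun ω => monotone_sup'_supportLine_ratGrid ψ (Z ω))
      (ae_of_all _ fun ω => hψ.tendsto_sup'_supportLine_ratGrid (Z ω))
  exact le_of_tendsto_of_tendsto' (hlim hψX fun n => (happrox n).integrable_left)
    (hlim hψY fun n => (happrox n).integrable_right) fun n => (happrox n).integral_le

end IntegralCompLE

lemma convexOn_max_sub_zero (x : ℝ) : ConvexOn ℝ univ fun u : ℝ => max (x - u) 0 :=
  ((convexOn_const x convex_univ).sub (concaveOn_id convex_univ)).sup
    (convexOn_const 0 convex_univ)

lemma lintegral_Iic_measure_Iic (μ : Measure ℝ) [SFinite μ] (x : ℝ) :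
    ∫⁻ t in Iic x, μ (Iic t) = ∫⁻ u, ENNReal.ofReal (x - u) ∂μ := by
  have hS : MeasurableSet {p : ℝ × ℝ | p.2 ≤ p.1} := measurableSet_le measurable_snd measurable_fst
  calc ∫⁻ t in Iic x, μ (Iic t) = ((volume.restrict (Iic x)).prod μ) {p | p.2 ≤ p.1} :=
        (Measure.prod_apply hS).symm
    _ = ∫⁻ u, volume.restrict (Iic x) (Ici u) ∂μ := Measure.prod_apply_symm hS
    _ = ∫⁻ u, ENNReal.ofReal (x - u) ∂μ := by
        simp_rw [Measure.restrict_apply measurableSet_Ici, Ici_inter_Iic, Real.volume_Icc]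

lemma lintegral_Iic_cdf_map {Ω : Type*} [MeasurableSpace Ω] {P : Measure Ω}
    [IsProbabilityMeasure P] {Z : Ω → ℝ} (hZ : Integrable Z P) (x : ℝ) :
    ∫⁻ t in Iic x, ENNReal.ofReal (cdf (P.map Z) t) = ENNReal.ofReal (∫ ω, max (x - Z ω) 0 ∂P) := by
  have := Measure.isProbabilityMeasure_map (μ := P) hZ.aemeasurable
  have hint : Integrable (fun ω => max (x - Z ω) 0) P := ((integrable_const x).sub hZ).pos_part
  simp_rw [ofReal_cdf]
  rw [lintegral_Iic_measure_Iic, lintegral_map' (by fun_prop) hZ.aemeasurable,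
    ofReal_integral_eq_lintegral_ofReal hint (ae_of_all _ fun _ => le_max_right _ _)]
  simp_rw [ENNReal.ofReal_max, ENNReal.ofReal_zero, max_zero]

theorem convex_order_iff_integrated_cdf_general
    {Ω : Type*} [MeasurableSpace Ω] (P : Measure Ω) [IsProbabilityMeasure P]
    (X Y : Ω → ℝ)
    (hIX : Integrable X P) (hIY : Integrable Y P)
    (hmean : ∫ ω, X ω ∂P = ∫ ω, Y ω ∂P) :
    (∀ ψ : ℝ → ℝ, ConvexOn ℝ Set.univ ψ →
        Integrable (fun ω => ψ (X ω)) P → Integrable (fun ω => ψ (Y ω)) P →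
        ∫ ω, ψ (X ω) ∂P ≤ ∫ ω, ψ (Y ω) ∂P)
      ↔
    (∀ x : ℝ,
      (∫⁻ t in Set.Iic x, ENNReal.ofReal (cdf (Measure.map X P) t)) ≤
        (∫⁻ t in Set.Iic x, ENNReal.ofReal (cdf (Measure.map Y P) t)) ∧
      (∫⁻ t in Set.Iic x, ENNReal.ofReal (cdf (Measure.map Y P) t)) < ⊤) := by
  have hinteg {Z : Ω → ℝ} (hZ : Integrable Z P) (t : ℝ) :
      Integrable (fun ω => max (t - Z ω) 0) P :=
    ((integrable_const t).sub hZ).pos_part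
  simp only [lintegral_Iic_cdf_map hIX, lintegral_Iic_cdf_map hIY, ENNReal.ofReal_lt_top,
    and_true]
  refine ⟨fun h x => ENNReal.ofReal_le_ofReal <|
      h _ (convexOn_max_sub_zero x) (hinteg hIX x) (hinteg hIY x),
    fun h ψ hψ hψX hψY => hψ.integral_comp_le_of_hinge hIX hIY hmean (fun t => ?_) hψX hψY⟩
  exact ⟨hinteg hIX t, hinteg hIY t,
    (ENNReal.ofReal_le_ofReal_iff (integral_nonneg fun _ => le_max_right _ _)).1 (h t)⟩

/-- Characterization of the convex order via integrated cumulative distribution functions. -/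
theorem convex_order_iff_integrated_cdf
    {Ω : Type*} [MeasurableSpace Ω] (P : Measure Ω) [IsProbabilityMeasure P]
    (X Y : Ω → ℝ) (hX : Measurable X) (hY : Measurable Y)
    (hIX : Integrable X P) (hIY : Integrable Y P)
    (hmean : ∫ ω, X ω ∂P = ∫ ω, Y ω ∂P) :
    (∀ ψ : ℝ → ℝ, ConvexOn ℝ Set.univ ψ →
        Integrable (fun ω => ψ (X ω)) P → Integrable (fun ω => ψ (Y ω)) P →
        ∫ ω, ψ (X ω) ∂P ≤ ∫ ω, ψ (Y ω) ∂P)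
      ↔
    (∀ x : ℝ,
      (∫⁻ t in Set.Iic x, ENNReal.ofReal (cdf (Measure.map X P) t)) ≤
        (∫⁻ t in Set.Iic x, ENNReal.ofReal (cdf (Measure.map Y P) t)) ∧
      (∫⁻ t in Set.Iic x, ENNReal.ofReal (cdf (Measure.map Y P) t)) < ⊤) :=
  convex_order_iff_integrated_cdf_general P X Y hIX hIY hmean
end

section
/- Let 0 < a₀ < a₁, δ = a₁ - a₀, and fix v > 0. Then the function h(u) = E[1/(a₁ - δ U_{u,v})] is convex on (0,1), where U_{u,v} ~ Beta(uv, (1-u)v). -/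
/-!
Expanding `1 / (a₁ - δx)` as a geometric series, which converges uniformly on `[0, 1]` since
`0 ≤ δ < a₁`, writes `h(u)` as `∑ₖ δᵏ / a₁ᵏ⁺¹ · E[U_{u,v}ᵏ]`. The `k`-th Beta moment is
`∏_{j<k} (uv + j) / (v + j)`, a product of nonnegative, nondecreasing affine functions of `u`,
hence convex; a pointwise convergent series of convex functions is convex.
-/

open MeasureTheory

open Set

theorem betaMeasure_eq_probabilityTheory_betaMeasure (a b : ℝ) :
    betaMeasure a b = ProbabilityTheory.betaMeasure a b := by
  rw [betaMeasure, ProbabilityTheory.betaMeasure, ← withDensity_indicator measurableSet_Ioo]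
  congr 1 with x
  by_cases hx : x ∈ Ioo (0:ℝ) 1
  · simp only [indicator_of_mem hx, ProbabilityTheory.betaPDF_of_pos_lt_one hx.1 hx.2,
      ProbabilityTheory.beta]
    ring_nf
  · rw [indicator_of_notMem hx, ProbabilityTheory.betaPDF, ProbabilityTheory.betaPDFReal,
      if_neg (show ¬(0 < x ∧ x < 1) from hx), ENNReal.ofReal_zero]

namespace ProbabilityTheory

theorem ae_mem_Ioo_betaMeasure (a b : ℝ) : ∀ᵐ x ∂betaMeasure a b, x ∈ Ioo 0 1 := by
  rw [← betaMeasure_eq_probabilityTheory_betaMeasure]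
  exact (withDensity_absolutelyContinuous _ _).ae_le (ae_restrict_mem measurableSet_Ioo)

theorem beta_add_one {a b : ℝ} (ha : a ≠ 0) (hab : a + b ≠ 0) :
    beta (a + 1) b = a / (a + b) * beta a b := by
  rw [beta, beta, Real.Gamma_add_one ha, add_right_comm, Real.Gamma_add_one hab]
  field_simp

theorem beta_add_nat {a b : ℝ} (ha : 0 < a) (hb : 0 < b) (k : ℕ) :
    beta (a + k) b = (∏ j ∈ Finset.range k, (a + j) / (a + b + j)) * beta a b := by
  induction k with
  | zero => simp
  | succ k ih =>
    rw [Finset.prod_range_succ, Nat.cast_succ, ← add_assoc,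
      beta_add_one (by positivity) (by linarith), ih, add_right_comm a b]
    ring

theorem betaPDFReal_nonneg {a b : ℝ} (ha : 0 < a) (hb : 0 < b) (x : ℝ) :
    0 ≤ betaPDFReal a b x := by
  by_cases hx : 0 < x ∧ x < 1
  · exact (betaPDFReal_pos hx.1 hx.2 ha hb).le
  · rw [betaPDFReal, if_neg hx]

theorem integral_betaPDFReal {a b : ℝ} (ha : 0 < a) (hb : 0 < b) :
    ∫ x, betaPDFReal a b x = 1 := by
  rw [integral_eq_lintegral_of_nonneg_ae (ae_of_all _ (betaPDFReal_nonneg ha hb))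
    (measurable_betaPDFReal a b).aestronglyMeasurable]
  change (∫⁻ x, betaPDF a b x).toReal = 1
  rw [lintegral_betaPDF_eq_one ha hb, ENNReal.toReal_one]

theorem pow_mul_betaPDFReal {a b : ℝ} (ha : 0 < a) (hb : 0 < b) (k : ℕ) (x : ℝ) :
    x ^ k * betaPDFReal a b x = beta (a + k) b / beta a b * betaPDFReal (a + k) b x := by
  have hB := (beta_pos (α := a + k) (by positivity) hb).ne'
  by_cases hx : 0 < x ∧ x < 1
  · rw [betaPDFReal, betaPDFReal, if_pos hx, if_pos hx, add_sub_right_comm,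
      Real.rpow_add hx.1, Real.rpow_natCast]
    field_simp
  · rw [betaPDFReal, betaPDFReal, if_neg hx, if_neg hx, mul_zero, mul_zero]

theorem integral_pow_betaMeasure {a b : ℝ} (ha : 0 < a) (hb : 0 < b) (k : ℕ) :
    ∫ x, x ^ k ∂betaMeasure a b = ∏ j ∈ Finset.range k, (a + j) / (a + b + j) := by
  rw [betaMeasure, integral_withDensity_eq_integral_toReal_smul (f := betaPDF a b)
    (measurable_betaPDFReal a b).ennreal_ofReal (ae_of_all _ fun _ => ENNReal.ofReal_lt_top)]
  simp_rw [betaPDF, ENNReal.toReal_ofReal (betaPDFReal_nonneg ha hb _), smul_eq_mul,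
    mul_comm _ (_ ^ k), pow_mul_betaPDFReal ha hb]
  rw [integral_const_mul, integral_betaPDFReal (by positivity) hb, mul_one, beta_add_nat ha hb,
    mul_div_cancel_right₀ _ (beta_pos ha hb).ne']

end ProbabilityTheory

theorem hasSum_inv_sub_mul {a δ x : ℝ} (h : |δ| < a) (hx : |x| ≤ 1) :
    HasSum (fun k : ℕ => δ ^ k / a ^ (k + 1) * x ^ k) (a - δ * x)⁻¹ := by
  have ha : 0 < a := (abs_nonneg δ).trans_lt h
  have hr : |δ / a * x| < 1 := by
    rw [abs_mul, abs_div, abs_of_pos ha]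
    calc |δ| / a * |x| ≤ |δ| / a * 1 := by gcongr
      _ < 1 := by rwa [mul_one, div_lt_one ha]
  have hgeom := (hasSum_geometric_of_abs_lt_one hr).mul_left a⁻¹
  rw [show a⁻¹ * (1 - δ / a * x)⁻¹ = (a - δ * x)⁻¹ by field_simp] at hgeom
  refine hgeom.congr_fun fun k => ?_
  rw [mul_pow, div_pow, pow_succ]
  field_simp

theorem hasSum_integral_inv_sub_mul {μ : Measure ℝ} [IsFiniteMeasure μ]
    (hμ : ∀ᵐ x ∂μ, |x| ≤ 1) {a δ : ℝ} (h : |δ| < a) :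
    HasSum (fun k : ℕ => δ ^ k / a ^ (k + 1) * ∫ x, x ^ k ∂μ) (∫ x, (a - δ * x)⁻¹ ∂μ) := by
  have ha : 0 < a := (abs_nonneg δ).trans_lt h
  simp_rw [← integral_const_mul]
  refine hasSum_integral_of_dominated_convergence (fun k _ => |δ| ^ k / a ^ (k + 1))
    (fun k => by fun_prop) (fun k => hμ.mono fun x hx => ?_)
    (ae_of_all _ fun _ => ?_) (integrable_const _) (hμ.mono fun x hx => hasSum_inv_sub_mul h hx)
  · calc ‖δ ^ k / a ^ (k + 1) * x ^ k‖ = |δ| ^ k / a ^ (k + 1) * |x| ^ k := by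
          rw [Real.norm_eq_abs, abs_mul, abs_div, abs_pow, abs_pow, abs_pow, abs_of_pos ha]
      _ ≤ |δ| ^ k / a ^ (k + 1) :=
          mul_le_of_le_one_right (by positivity) (pow_le_one₀ (abs_nonneg x) hx)
  · simpa using (hasSum_inv_sub_mul (δ := |δ|) (by rwa [abs_abs]) (x := 1) (by simp)).summable

theorem convexOn_of_hasSum {E ι : Type*} [AddCommMonoid E] [Module ℝ E] {s : Set E}
    {f : ι → E → ℝ} {g : E → ℝ} (hs : Convex ℝ s) (hf : ∀ i, ConvexOn ℝ s (f i))
    (hg : ∀ x ∈ s, HasSum (fun i => f i x) (g x)) : ConvexOn ℝ s g :=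
  ⟨hs, fun x hx y hy a b ha hb hab => hasSum_le (fun i => (hf i).2 hx hy ha hb hab)
    (hg _ (hs hx hy ha hb hab)) (((hg x hx).mul_left a).add ((hg y hy).mul_left b))⟩

theorem ConvexOn.prod_of_monotoneOn {𝕜 ι : Type*} [Field 𝕜] [LinearOrder 𝕜]
    [IsStrictOrderedRing 𝕜] {s : Set 𝕜} {f : ι → 𝕜 → 𝕜} (t : Finset ι) (hs : Convex 𝕜 s)
    (hf : ∀ i ∈ t, ConvexOn 𝕜 s (f i)) (hmono : ∀ i ∈ t, MonotoneOn (f i) s)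
    (hnonneg : ∀ i ∈ t, ∀ x ∈ s, 0 ≤ f i x) : ConvexOn 𝕜 s (fun x => ∏ i ∈ t, f i x) := by
  induction t using Finset.cons_induction with
  | empty => simpa using convexOn_const 1 hs
  | cons i t hi ih =>
    simp only [Finset.forall_mem_cons] at hf hmono hnonneg
    simp_rw [Finset.prod_cons]
    refine hf.1.mul (ih hf.2 hmono.2 hnonneg.2) (fun x hx => hnonneg.1 x hx)
      (fun x hx => Finset.prod_nonneg fun j hj => hnonneg.2 j hj x hx)
      (hmono.1.monovaryOn fun x hx y hy hxy =>
        Finset.prod_le_prod (fun j hj => hnonneg.2 j hj x hx) fun j hj => hmono.2 j hj hx hy hxy)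

theorem convexOn_prod_mul_add_div {v : ℝ} (hv : 0 < v) (k : ℕ) :
    ConvexOn ℝ (Ioi 0) (fun u => ∏ j ∈ Finset.range k, (u * v + j) / (v + j)) := by
  have hfactor (j : ℕ) :
      (fun u : ℝ => (u * v + j) / (v + j)) = fun u => (v / (v + j)) • u + j / (v + j) := by
    ext u
    rw [smul_eq_mul]
    field_simp
  refine ConvexOn.prod_of_monotoneOn _ (convex_Ioi 0) (fun j _ => ?_) (fun j _ => ?_)
    (fun j _ u hu => ?_)
  · rw [hfactor]
    exact ((convexOn_id (convex_Ioi 0)).smul (by positivity)).add_const _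
  · exact fun x _ y _ hxy => by gcongr
  · have : (0:ℝ) < u := hu
    positivity

theorem hasSum_integral_inv_sub_mul_betaMeasure {a b c δ : ℝ} (ha : 0 < a) (hb : 0 < b)
    (h : |δ| < c) :
    HasSum (fun k : ℕ => δ ^ k / c ^ (k + 1) * ∏ j ∈ Finset.range k, (a + j) / (a + b + j))
      (∫ x, (c - δ * x)⁻¹ ∂betaMeasure a b) := by
  rw [betaMeasure_eq_probabilityTheory_betaMeasure]
  have := ProbabilityTheory.isProbabilityMeasureBeta ha hb
  simpa only [ProbabilityTheory.integral_pow_betaMeasure ha hb] using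
    hasSum_integral_inv_sub_mul ((ProbabilityTheory.ae_mem_Ioo_betaMeasure a b).mono
      fun x hx => abs_le.2 ⟨by linarith [hx.1], hx.2.le⟩) h

/-- `u ↦ E[1/(a₁ - δ U_{u,v})]` is convex on `(0,1)`, where `δ = a₁ - a₀` and
`U_{u,v} ~ Beta(uv, (1-u)v)`. -/
theorem convexity_inverse_moment (a₀ a₁ v : ℝ) (ha₀ : 0 < a₀) (ha : a₀ < a₁) (hv : 0 < v) :
    ConvexOn ℝ (Set.Ioo (0:ℝ) 1)
      (fun u => ∫ x, (a₁ - (a₁ - a₀) * x)⁻¹ ∂(betaMeasure (u * v) ((1 - u) * v))) := by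
  have hδ : |a₁ - a₀| < a₁ := by rw [abs_of_pos (sub_pos.2 ha)]; linarith
  refine convexOn_of_hasSum (convex_Ioo 0 1)
    (f := fun k u => (a₁ - a₀) ^ k / a₁ ^ (k + 1) * ∏ j ∈ Finset.range k, (u * v + j) / (v + j))
    (fun k => ?_) fun u ⟨hu₀, hu₁⟩ => ?_
  · have hc : 0 ≤ (a₁ - a₀) ^ k / a₁ ^ (k + 1) :=
      div_nonneg (pow_nonneg (sub_nonneg.2 ha.le) k) (pow_nonneg (ha₀.trans ha).le _)
    exact ((convexOn_prod_mul_add_div hv k).subset Ioo_subset_Ioi_self (convex_Ioo 0 1)).smul hc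
  · simpa only [show u * v + (1 - u) * v = v by ring] using
      hasSum_integral_inv_sub_mul_betaMeasure (mul_pos hu₀ hv) (mul_pos (sub_pos.2 hu₁) hv) hδ
end

section
/- Let ψ: ℝ → ℝ be strongly convex with parameter m > 0, and let X, Z be real random variables with E[Z | X] = 0 and E[ψ(X+Z)] = E[ψ(X)] (all expectations finite). Then Z = 0 almost surely. -/
/-!
Write `ψ = g + (m/2) x²` with `g` convex and let `h` be the right derivative of `ψ`, a Borel
function. Then `ψ (x + z) ≥ ψ x + h x * z + (m/2) z²` for all `x, z`. On the `σ(X)`-measurable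
sets `A_N = {|h X| ≤ N}` the cross term `h(X) Z` is bounded, so it integrates to zero by
`E[Z | X] = 0`, giving `(m/2) ∫_{A_N} Z² ≤ ∫_{A_N} (ψ(X+Z) - ψ(X))`. The right side tends to
`E[ψ(X+Z)] - E[ψ(X)] = 0`, while the left side increases in `N`; hence `Z = 0` on every `A_N`.
-/

open MeasureTheory Set Filter Topology

theorem ConvexOn.add_rightDeriv_mul_sub_le {S : Set ℝ} {g : ℝ → ℝ} {x y : ℝ}
    (hg : ConvexOn ℝ S g) (hx : x ∈ interior S) (hy : y ∈ S) :
    g x + derivWithin g (Ioi x) x * (y - x) ≤ g y := by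
  rcases lt_trichotomy x y with hxy | rfl | hyx
  · have hslope := hg.rightDeriv_le_slope_of_mem_interior hx hy hxy
    rw [slope_def_field, le_div_iff₀ (sub_pos.mpr hxy)] at hslope
    linarith
  · simp
  · have hslope := (hg.slope_le_leftDeriv_of_mem_interior hy hx hyx).trans
      (hg.leftDeriv_le_rightDeriv_of_mem_interior hx)
    rw [slope_def_field, div_le_iff₀ (sub_pos.mpr hyx)] at hslope
    linarith

theorem StrongConvexOn.exists_measurable_subgradient {ψ : ℝ → ℝ} {m : ℝ}
    (hψ : StrongConvexOn univ m ψ) :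
    ∃ h : ℝ → ℝ, Measurable h ∧ ∀ x z, ψ x + h x * z + m / 2 * z ^ 2 ≤ ψ (x + z) := by
  set g : ℝ → ℝ := fun x ↦ ψ x - m / 2 * ‖x‖ ^ 2
  have hg : ConvexOn ℝ univ g := strongConvexOn_iff_convex.mp hψ
  refine ⟨fun x ↦ derivWithin g (Ioi x) x + m * x,
    (measurable_derivWithin_Ioi g).add (measurable_const.mul measurable_id), fun x z ↦ ?_⟩
  have hsub := hg.add_rightDeriv_mul_sub_le (x := x) (y := x + z) (by simp) (mem_univ _)
  have hg_apply : ∀ y, g y = ψ y - m / 2 * y ^ 2 := fun y ↦ by simp [g]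
  rw [hg_apply, hg_apply, add_sub_cancel_left] at hsub
  linear_combination hsub

section Probability

variable {Ω : Type*} {m0 : MeasurableSpace Ω} {μ : Measure Ω}

theorem setIntegral_mul_eq_zero_of_condExp_eq_zero [IsFiniteMeasure μ]
    {𝓜 : MeasurableSpace Ω} (h𝓜 : 𝓜 ≤ m0) {s : Set Ω} (hs : MeasurableSet[𝓜] s)
    {f Z : Ω → ℝ} (hf : StronglyMeasurable[𝓜] f) {C : ℝ} (hfC : ∀ ω ∈ s, |f ω| ≤ C)
    (hZ : Integrable Z μ) (hcond : μ[Z | 𝓜] =ᵐ[μ] 0) :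
    ∫ ω in s, f ω * Z ω ∂μ = 0 := by
  have hbound : ∀ ω, ‖s.indicator f ω‖ ≤ |C| := fun ω ↦ by
    by_cases hω : ω ∈ s
    · simpa [hω] using (hfC ω hω).trans (le_abs_self C)
    · simp [hω]
  have hpull := condExp_stronglyMeasurable_mul_of_bound h𝓜 (hf.indicator hs) hZ |C|
    (ae_of_all _ hbound)
  have hvanish : s.indicator f * μ[Z | 𝓜] =ᵐ[μ] 0 := by
    filter_upwards [hcond] with ω hω
    simp [hω]
  calc ∫ ω in s, f ω * Z ω ∂μ = ∫ ω, (s.indicator f * Z) ω ∂μ := by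
        rw [← integral_indicator (h𝓜 s hs)]
        simp only [Pi.mul_apply, indicator_mul_left]
    _ = ∫ ω, μ[s.indicator f * Z | 𝓜] ω ∂μ := (integral_condExp h𝓜).symm
    _ = 0 := by simp [integral_congr_ae (hpull.trans hvanish)]

theorem integrableOn_and_setIntegral_le_of_le_sub_mul [IsFiniteMeasure μ]
    {𝓜 : MeasurableSpace Ω} (h𝓜 : 𝓜 ≤ m0) {s : Set Ω} (hs : MeasurableSet[𝓜] s)
    {f Z u w : Ω → ℝ} (hf : StronglyMeasurable[𝓜] f) {C : ℝ} (hfC : ∀ ω ∈ s, |f ω| ≤ C)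
    (hZ : Integrable Z μ) (hcond : μ[Z | 𝓜] =ᵐ[μ] 0) (hu : Integrable u μ)
    (hw : AEStronglyMeasurable[m0] w μ) (hw0 : 0 ≤ w) (hwu : ∀ ω, w ω ≤ u ω - f ω * Z ω) :
    IntegrableOn w s μ ∧ ∫ ω in s, w ω ∂μ ≤ ∫ ω in s, u ω ∂μ := by
  have hfZ : IntegrableOn (fun ω ↦ f ω * Z ω) s μ :=
    hZ.integrableOn.bdd_mul (hf.mono h𝓜).aestronglyMeasurable
      ((ae_restrict_iff' (h𝓜 s hs)).mpr (ae_of_all _ hfC))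
  have hws : IntegrableOn w s μ := (hu.integrableOn.sub hfZ).mono' hw.restrict
    (ae_of_all _ fun ω ↦ (Real.norm_of_nonneg (hw0 ω)).trans_le (hwu ω))
  refine ⟨hws, ?_⟩
  calc ∫ ω in s, w ω ∂μ ≤ ∫ ω in s, u ω - f ω * Z ω ∂μ :=
        setIntegral_mono hws (hu.integrableOn.sub hfZ) hwu
    _ = ∫ ω in s, u ω ∂μ := by
        rw [integral_sub hu.integrableOn hfZ,
          setIntegral_mul_eq_zero_of_condExp_eq_zero h𝓜 hs hf hfC hZ hcond, sub_zero]

theorem ae_eq_zero_of_setIntegral_le_setIntegral {u w : Ω → ℝ} {A : ℕ → Set Ω}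
    (hA : ∀ N, MeasurableSet (A N)) (hA_mono : Monotone A) (hA_cover : ⋃ N, A N = univ)
    (hu : Integrable u μ) (hu0 : ∫ ω, u ω ∂μ = 0) (hw : 0 ≤ w)
    (hwA : ∀ N, IntegrableOn w (A N) μ)
    (hle : ∀ N, ∫ ω in A N, w ω ∂μ ≤ ∫ ω in A N, u ω ∂μ) :
    w =ᵐ[μ] 0 := by
  have htend : Tendsto (fun N ↦ ∫ ω in A N, u ω ∂μ) atTop (𝓝 0) := by
    simpa [hA_cover, hu0] using tendsto_setIntegral_of_monotone hA hA_mono hu.integrableOn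
  have hzero : ∀ N, ∫ ω in A N, w ω ∂μ = 0 := fun N ↦ by
    refine le_antisymm (ge_of_tendsto htend ?_) (setIntegral_nonneg (hA N) fun ω _ ↦ hw ω)
    filter_upwards [eventually_ge_atTop N] with M hNM
    exact (setIntegral_mono_set (hwA M) (ae_of_all _ hw) (hA_mono hNM).eventuallyLE).trans
      (hle M)
  have hAe : ∀ N, ∀ᵐ ω ∂μ.restrict (A N), w ω = 0 := fun N ↦
    (setIntegral_eq_zero_iff_of_nonneg_ae (ae_of_all _ hw) (hwA N)).mp (hzero N)
  rw [← ae_restrict_iUnion_iff, hA_cover, Measure.restrict_univ] at hAe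
  exact hAe

end Probability

theorem ae_zero_of_strongConvex_eq_general
    {Ω : Type*} [m0 : MeasurableSpace Ω] (P : Measure Ω) [IsProbabilityMeasure P]
    (X Z : Ω → ℝ) (hX : Measurable X)
    (ψ : ℝ → ℝ) (m : ℝ) (hm : 0 < m) (hψ : StrongConvexOn Set.univ m ψ)
    (hZint : Integrable Z P)
    (hcond : P[Z | MeasurableSpace.comap X Real.measurableSpace] =ᵐ[P] 0)
    (hIX : Integrable (fun ω => ψ (X ω)) P)
    (hIXZ : Integrable (fun ω => ψ (X ω + Z ω)) P)
    (heq : ∫ ω, ψ (X ω + Z ω) ∂P = ∫ ω, ψ (X ω) ∂P) :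
    Z =ᵐ[P] 0 := by
  obtain ⟨h, hh, hsub⟩ := hψ.exists_measurable_subgradient
  have hXle : MeasurableSpace.comap X Real.measurableSpace ≤ m0 := hX.comap_le
  set A : ℕ → Set Ω := fun N ↦ X ⁻¹' {x | |h x| ≤ N}
  have hA_X : ∀ N, MeasurableSet[MeasurableSpace.comap X Real.measurableSpace] (A N) :=
    fun N ↦ ⟨_, measurableSet_le hh.abs measurable_const, rfl⟩
  have hA_mono : Monotone A := fun _ _ hNM _ hω ↦ le_trans (α := ℝ) hω (Nat.cast_le.mpr hNM)
  have hA_cover : ⋃ N, A N = univ :=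
    eq_univ_of_forall fun ω ↦ mem_iUnion.2 (exists_nat_ge |h (X ω)|)
  have hhX : StronglyMeasurable[MeasurableSpace.comap X Real.measurableSpace] (h ∘ X) :=
    (hh.comp (comap_measurable X)).stronglyMeasurable
  have hu : Integrable (fun ω ↦ ψ (X ω + Z ω) - ψ (X ω)) P := hIXZ.sub hIX
  have hgap (N : ℕ) :=
    integrableOn_and_setIntegral_le_of_le_sub_mul (w := fun ω ↦ m / 2 * Z ω ^ 2) hXle
      (hA_X N) hhX (fun _ hω ↦ hω) hZint hcond hu
      ((hZint.aestronglyMeasurable.pow 2).const_mul (m / 2)) (fun ω ↦ by positivity)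
      (fun ω ↦ by simp only [Function.comp_apply]; linarith [hsub (X ω) (Z ω)])
  have hZsq := ae_eq_zero_of_setIntegral_le_setIntegral (fun N ↦ hXle _ (hA_X N)) hA_mono
    hA_cover hu (by rw [integral_sub hIXZ hIX, heq, sub_self]) (fun ω ↦ by positivity)
    (fun N ↦ (hgap N).1) (fun N ↦ (hgap N).2)
  filter_upwards [hZsq] with ω hω
  simpa [hm.ne'] using hω

/-- If `ψ` is strongly convex, `E[Z | X] = 0` and `E[ψ(X+Z)] = E[ψ(X)]`, then `Z = 0`
almost surely. -/
theorem ae_zero_of_strongConvex_eq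
    {Ω : Type*} [m0 : MeasurableSpace Ω] (P : Measure Ω) [IsProbabilityMeasure P]
    (X Z : Ω → ℝ) (hX : Measurable X) (hZ : Measurable Z)
    (ψ : ℝ → ℝ) (m : ℝ) (hm : 0 < m) (hψ : StrongConvexOn Set.univ m ψ)
    (hZint : Integrable Z P)
    (hcond : P[Z | MeasurableSpace.comap X Real.measurableSpace] =ᵐ[P] 0)
    (hIX : Integrable (fun ω => ψ (X ω)) P)
    (hIXZ : Integrable (fun ω => ψ (X ω + Z ω)) P)
    (heq : ∫ ω, ψ (X ω + Z ω) ∂P = ∫ ω, ψ (X ω) ∂P) :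
    Z =ᵐ[P] 0 :=
  ae_zero_of_strongConvex_eq_general (m0 := m0) P X Z hX ψ m hm hψ hZint hcond hIX hIXZ heq
end

section
/- Let f: (0,1) × (0,∞) → ℝ be such that for each fixed u, v ↦ f(u,v) is strictly increasing; suppose there is an open interval I ⊂ (0,1) such that for u ∈ I, f(u,v) < 0 for small v and f(u,v) > 0 for large v, while for u ∉ closure(I), f(u,v) < 0 for all v. Then there exists a function v_c: (0,1) → [0,∞] with domain of finiteness I such that f(u,v) < 0 iff v < v_c(u) and f(u,v) > 0 iff v > v_c(u). Moreover, if additionally u ↦ f(u,v) is concave for each v, then v_c is quasi-convex on (0,1). -/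
open Set ENNReal

/-!
For fixed `u`, the map `v ↦ f u v` is strictly increasing, so `v_c(u)` can be taken to be its
unique positive zero (and `∞` if there is none). On `I` a zero exists by the intermediate value
theorem. Off `I` there is none: outside `closure I` by hypothesis, and at a point `u` of
`closure I \ I` because the order-connected set `I` lies on one side of `u`, so `u` is a limit of
points outside `closure I`; continuity in `u` gives `f u v ≤ 0`, and monotonicity in `v` makes it
strict. Quasi-convexity holds because `{u | v_c(u) < v} = {u | 0 < f u v}` is a superlevel set of
a concave function.
-/

lemma Set.OrdConnected.subset_Iio_or_subset_Ioi {α : Type*} [LinearOrder α] {s : Set α}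
    (hs : s.OrdConnected) {x : α} (hx : x ∉ s) : s ⊆ Iio x ∨ s ⊆ Ioi x := by
  refine or_iff_not_imp_left.2 fun h y hy => ?_
  obtain ⟨z, hz, hxz⟩ := not_subset.1 h
  by_contra hyx
  exact hx (hs.out hy hz ⟨not_lt.1 hyx, not_lt.1 hxz⟩)

lemma Set.OrdConnected.mem_closure_Ioo_diff_closure {α : Type*} [LinearOrder α]
    [TopologicalSpace α] [OrderTopology α] [DenselyOrdered α] {s : Set α} (hs : s.OrdConnected)
    {a b x : α} (hx : x ∈ Ioo a b) (hxs : x ∉ s) : x ∈ closure (Ioo a b \ closure s) := by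
  rcases hs.subset_Iio_or_subset_Ioi hxs with h | h
  · have hcl : closure s ⊆ Iic x := closure_minimal (h.trans Iio_subset_Iic_self) isClosed_Iic
    have hsub : Ioo x b ⊆ Ioo a b \ closure s := fun y hy =>
      ⟨⟨hx.1.trans hy.1, hy.2⟩, fun hys => (hcl hys).not_gt hy.1⟩
    exact closure_mono hsub (by rw [closure_Ioo hx.2.ne]; exact left_mem_Icc.2 hx.2.le)
  · have hcl : closure s ⊆ Ici x := closure_minimal (h.trans Ioi_subset_Ici_self) isClosed_Ici
    have hsub : Ioo a x ⊆ Ioo a b \ closure s := fun y hy =>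
      ⟨⟨hy.1, hy.2.trans hx.2⟩, fun hys => (hcl hys).not_gt hy.2⟩
    exact closure_mono hsub (by rw [closure_Ioo hx.1.ne]; exact right_mem_Icc.2 hx.1.le)

lemma ENNReal.le_of_forall_lt_ofReal {w z : ℝ≥0∞}
    (h : ∀ v > (0 : ℝ), w < ENNReal.ofReal v → z < ENNReal.ofReal v) : z ≤ w := by
  by_contra! hwz
  obtain ⟨m, hwm, hmz⟩ := exists_between hwz
  have hm : m ≠ ⊤ := hmz.ne_top
  have hv : 0 < m.toReal := toReal_pos (pos_of_gt hwm).ne' hm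
  rw [← ofReal_toReal hm] at hwm hmz
  exact (h _ hv hwm).not_gt hmz

open Classical in
noncomputable def posZero (g : ℝ → ℝ) : ℝ≥0∞ :=
  if h : ∃ r > 0, g r = 0 then ENNReal.ofReal h.choose else ⊤

lemma posZero_lt_top_iff {g : ℝ → ℝ} : posZero g < ⊤ ↔ ∃ r > 0, g r = 0 := by
  unfold posZero
  split_ifs with h <;> simp [h]

lemma posZero_eq_ofReal {g : ℝ → ℝ} (hg : StrictMonoOn g (Ioi 0)) {r : ℝ} (hr : 0 < r)
    (hgr : g r = 0) : posZero g = ENNReal.ofReal r := by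
  have h : ∃ r > 0, g r = 0 := ⟨r, hr, hgr⟩
  obtain ⟨hr', hgr'⟩ := h.choose_spec
  rw [posZero, dif_pos h, hg.injOn hr' hr (hgr'.trans hgr.symm)]

lemma StrictMonoOn.sign_iff_posZero {g : ℝ → ℝ} (hg : StrictMonoOn g (Ioi 0))
    (hzero : (∃ r > 0, g r = 0) ∨ ∀ w > 0, g w < 0) {v : ℝ} (hv : 0 < v) :
    (g v < 0 ↔ ENNReal.ofReal v < posZero g) ∧ (0 < g v ↔ posZero g < ENNReal.ofReal v) := by
  rcases hzero with ⟨r, hr, hgr⟩ | hneg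
  · rw [posZero_eq_ofReal hg hr hgr, ofReal_lt_ofReal_iff hr, ofReal_lt_ofReal_iff hv, ← hgr]
    exact ⟨hg.lt_iff_lt hv hr, hg.lt_iff_lt hr hv⟩
  · have htop : posZero g = ⊤ := by
      rw [posZero, dif_neg fun ⟨r, hr, hgr⟩ => (hneg r hr).ne hgr]
    simp [htop, hneg v hv, (hneg v hv).not_gt]

section CriticalCurve

variable {f : ℝ → ℝ → ℝ} {I : Set ℝ}

lemma neg_of_notMem
    (hcont : ContinuousOn (fun p : ℝ × ℝ => f p.1 p.2) (Ioo 0 1 ×ˢ Ioi 0))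
    (hmono : ∀ u ∈ Ioo (0:ℝ) 1, StrictMonoOn (f u) (Ioi 0)) (hI : I.OrdConnected)
    (hout : ∀ u ∈ Ioo (0:ℝ) 1 \ closure I, ∀ v > (0:ℝ), f u v < 0)
    {u : ℝ} (hu : u ∈ Ioo 0 1) (huI : u ∉ I) {v : ℝ} (hv : 0 < v) : f u v < 0 := by
  have hle : ∀ w > (0:ℝ), f u w ≤ 0 := fun w hw => by
    have hcw : ContinuousOn (f · w) (Ioo 0 1) :=
      hcont.comp (Continuous.prodMk_left w).continuousOn fun _ hx => ⟨hx, hw⟩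
    exact ContinuousWithinAt.closure_le (hI.mem_closure_Ioo_diff_closure hu huI)
      ((hcw u hu).mono sdiff_subset) continuousWithinAt_const fun x hx => (hout x hx w hw).le
  calc f u v < f u (v + 1) := hmono u hu hv (mem_Ioi.2 (by linarith)) (lt_add_one v)
    _ ≤ 0 := hle _ (by linarith)

lemma exists_pos_zero_iff_mem
    (hcont : ContinuousOn (fun p : ℝ × ℝ => f p.1 p.2) (Ioo 0 1 ×ˢ Ioi 0))
    (hmono : ∀ u ∈ Ioo (0:ℝ) 1, StrictMonoOn (f u) (Ioi 0)) (hI : I.OrdConnected)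
    (hin : ∀ u ∈ I, (∃ v > (0:ℝ), f u v < 0) ∧ (∃ v > (0:ℝ), 0 < f u v))
    (hout : ∀ u ∈ Ioo (0:ℝ) 1 \ closure I, ∀ v > (0:ℝ), f u v < 0)
    {u : ℝ} (hu : u ∈ Ioo 0 1) : (∃ r > 0, f u r = 0) ↔ u ∈ I := by
  refine ⟨fun ⟨r, hr, hfr⟩ => ?_, fun huI => ?_⟩
  · by_contra huI
    exact (neg_of_notMem hcont hmono hI hout hu huI hr).ne hfr
  · obtain ⟨⟨a, ha, hfa⟩, b, hb, hfb⟩ := hin u huI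
    have hcu : ContinuousOn (f u) (Ioi 0) :=
      hcont.comp (Continuous.prodMk_right u).continuousOn fun _ hv => ⟨hu, hv⟩
    obtain ⟨r, hr, hfr⟩ := isPreconnected_Ioi.intermediate_value ha hb hcu ⟨hfa.le, hfb.le⟩
    exact ⟨r, hr, hfr⟩

end CriticalCurve

theorem exists_critical_curve_general
    (f : ℝ → ℝ → ℝ)
    (hcont : ContinuousOn (fun p : ℝ × ℝ => f p.1 p.2) (Ioo 0 1 ×ˢ Ioi 0))
    (hmono : ∀ u ∈ Ioo (0:ℝ) 1, StrictMonoOn (f u) (Ioi 0))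
    (I : Set ℝ) (hIconn : I.OrdConnected)
    (hin : ∀ u ∈ I, (∃ v > (0:ℝ), f u v < 0) ∧ (∃ v > (0:ℝ), 0 < f u v))
    (hout : ∀ u ∈ Ioo (0:ℝ) 1 \ closure I, ∀ v > (0:ℝ), f u v < 0) :
    ∃ vc : ℝ → ℝ≥0∞,
      (∀ u ∈ Ioo (0:ℝ) 1, (vc u < ⊤ ↔ u ∈ I)) ∧
      (∀ u ∈ Ioo (0:ℝ) 1, ∀ v > (0:ℝ),
        (f u v < 0 ↔ ENNReal.ofReal v < vc u) ∧ (0 < f u v ↔ vc u < ENNReal.ofReal v)) ∧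
      ((∀ v ∈ Ioi (0:ℝ), ConcaveOn ℝ (Ioo (0:ℝ) 1) (fun u => f u v)) →
        ∀ a b c : ℝ, a ∈ Ioo (0:ℝ) 1 → c ∈ Ioo (0:ℝ) 1 → a < b → b < c →
          vc b ≤ max (vc a) (vc c)) := by
  have hzero : ∀ u ∈ Ioo (0:ℝ) 1, (∃ r > 0, f u r = 0) ↔ u ∈ I := fun u hu =>
    exists_pos_zero_iff_mem hcont hmono hIconn hin hout hu
  have hsign : ∀ u ∈ Ioo (0:ℝ) 1, ∀ v > (0:ℝ),
      (f u v < 0 ↔ ENNReal.ofReal v < posZero (f u)) ∧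
        (0 < f u v ↔ posZero (f u) < ENNReal.ofReal v) := fun u hu v hv => by
    refine (hmono u hu).sign_iff_posZero ?_ hv
    by_cases huI : u ∈ I
    exacts [.inl ((hzero u hu).2 huI),
      .inr fun w hw => neg_of_notMem hcont hmono hIconn hout hu huI hw]
  refine ⟨fun u => posZero (f u), fun u hu => posZero_lt_top_iff.trans (hzero u hu), hsign, ?_⟩
  intro hconc a b c ha hc hab hbc
  have hb : b ∈ Ioo (0:ℝ) 1 := ⟨ha.1.trans hab, hbc.trans hc.2⟩
  refine ENNReal.le_of_forall_lt_ofReal fun v hv hlt => ?_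
  rw [max_lt_iff] at hlt
  rw [← (hsign b hb v hv).2]
  calc 0 < min (f a v) (f c v) :=
        lt_min ((hsign a ha v hv).2.2 hlt.1) ((hsign c hc v hv).2.2 hlt.2)
    _ ≤ f b v := (hconc v hv).min_le_of_mem_Icc ha hc ⟨hab.le, hbc.le⟩

/-- Existence of the critical curve `v_c` separating negativity and positivity regions of
`f(u,v)`, and its quasi-convexity when `f` is concave in `u`. -/
theorem exists_critical_curve
    (f : ℝ → ℝ → ℝ)
    (hcont : ContinuousOn (fun p : ℝ × ℝ => f p.1 p.2) (Ioo 0 1 ×ˢ Ioi 0))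
    (hmono : ∀ u ∈ Ioo (0:ℝ) 1, StrictMonoOn (f u) (Ioi 0))
    (I : Set ℝ) (hIopen : IsOpen I) (hIconn : I.OrdConnected) (hIsub : I ⊆ Ioo 0 1)
    (hin : ∀ u ∈ I, (∃ v > (0:ℝ), f u v < 0) ∧ (∃ v > (0:ℝ), 0 < f u v))
    (hout : ∀ u ∈ Ioo (0:ℝ) 1 \ closure I, ∀ v > (0:ℝ), f u v < 0) :
    ∃ vc : ℝ → ℝ≥0∞,
      (∀ u ∈ Ioo (0:ℝ) 1, (vc u < ⊤ ↔ u ∈ I)) ∧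
      (∀ u ∈ Ioo (0:ℝ) 1, ∀ v > (0:ℝ),
        (f u v < 0 ↔ ENNReal.ofReal v < vc u) ∧ (0 < f u v ↔ vc u < ENNReal.ofReal v)) ∧
      ((∀ v ∈ Ioi (0:ℝ), ConcaveOn ℝ (Ioo (0:ℝ) 1) (fun u => f u v)) →
        ∀ a b c : ℝ, a ∈ Ioo (0:ℝ) 1 → c ∈ Ioo (0:ℝ) 1 → a < b → b < c →
          vc b ≤ max (vc a) (vc c)) :=
  exists_critical_curve_general f hcont hmono I hIconn hin hout
end

section
/- Suppose a₀ < c₀ < a₁ < c₁ and b₁ < d₁ < b₀ < d₀ (all positive). Define, for s ∈ [0,1], averaged coefficients b_s = ((1-s)α₀b₀ + sα₁b₁)/α_s, d_s = ((1-s)β₀d₀ + sβ₁d₁)/β_s (with α_s, β_s convex combinations as usual, α₀,α₁,β₀,β₁ > 0), and similarly a_s, c_s. Let I = {s : a_s > c_s} and J = {s : b_s > d_s}. Then the region K = {(x,y) ∈ ℝ₊² : x ≥ x̃, 0 ≤ y ≤ ỹ}, where (x̃, ỹ) is the intersection of the lines c₀x + d₀y = 1 and c₁x + d₁y = 1, is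 positively invariant under both vector fields F₀ and F₁ (the Lotka–Volterra fields with environments 0 and 1). -/
/-!
Along the left edge `x = xt` (with `y ≤ yt`) the `x`-component of the field is positive, because
the corner `(xt, yt)` lies strictly below the `x`-nullcline `a x + b y = 1`. Along the top edge
`y = yt` (with `x > xt`) the `y`-component is negative, because the corner lies on the
`y`-nullcline `c x + d y = 1`. At the corner itself `y' = 0` but `y'' = -β yt c x' < 0`. Hence every
point of `{x ≥ xt, y ≤ yt}` stays there for a short time, and a closed set with this property is
forward invariant. Finally `y` solves the linear equation `y' = g(t) y`, so its sign never changes.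
-/

open Set Filter Topology

theorem HasDerivAt.eventually_nhdsGT_lt_of_pos {f : ℝ → ℝ} {f' t : ℝ} (hf : HasDerivAt f f' t)
    (hf' : 0 < f') : ∀ᶠ s in 𝓝[>] t, f t < f s := by
  filter_upwards [(hasDerivAt_iff_tendsto_slope_left_right.1 hf).2.eventually
    (eventually_gt_nhds hf'), self_mem_nhdsWithin] with s hslope hs
  exact (slope_pos_iff hs).1 hslope

theorem HasDerivAt.eventually_nhdsGT_lt_of_neg {f : ℝ → ℝ} {f' t : ℝ} (hf : HasDerivAt f f' t)
    (hf' : f' < 0) : ∀ᶠ s in 𝓝[>] t, f s < f t := by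
  simpa using hf.neg.eventually_nhdsGT_lt_of_pos (neg_pos.2 hf')

theorem HasDerivAt.eventually_nhdsGT_gt {f : ℝ → ℝ} {f' t c : ℝ} (hf : HasDerivAt f f' t)
    (hc : c ≤ f t) (hf' : f t = c → 0 < f') : ∀ᶠ s in 𝓝[>] t, c < f s := by
  rcases hc.lt_or_eq with hlt | heq
  · exact nhdsWithin_le_nhds (hf.continuousAt.eventually (lt_mem_nhds hlt))
  · exact heq ▸ hf.eventually_nhdsGT_lt_of_pos (hf' heq.symm)

theorem eventually_nhdsGT_lt_of_deriv_eq_zero_of_deriv_neg {f f' : ℝ → ℝ} {f'' t : ℝ}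
    (hf : ∀ s, HasDerivAt f (f' s) s) (hf't : f' t = 0) (hf'' : HasDerivAt f' f'' t)
    (hneg : f'' < 0) : ∀ᶠ s in 𝓝[>] t, f s < f t := by
  obtain ⟨u, hu, hf'neg⟩ := mem_nhdsGT_iff_exists_Ioc_subset.1
    (hf''.eventually_nhdsGT_lt_of_neg hneg : ∀ᶠ s in 𝓝[>] t, f' s < f' t)
  have hanti : StrictAntiOn f (Icc t u) :=
    strictAntiOn_of_hasDerivWithinAt_neg (convex_Icc t u)
      (HasDerivAt.continuousOn fun s _ => hf s) (fun s _ => (hf s).hasDerivWithinAt)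
      fun s hs => by
        rw [interior_Icc] at hs
        simpa [hf't] using hf'neg (Ioo_subset_Ioc_self hs)
  filter_upwards [Ioc_mem_nhdsGT hu] with s hs
  exact hanti (left_mem_Icc.2 (le_of_lt hu)) (Ioc_subset_Icc_self hs) hs.1

theorem eq_mul_exp_integral_of_hasDerivAt_mul {y g : ℝ → ℝ} (hg : Continuous g)
    (hy : ∀ t, HasDerivAt y (g t * y t) t) (t : ℝ) :
    y t = y 0 * Real.exp (∫ s in (0 : ℝ)..t, g s) := by
  set G : ℝ → ℝ := fun t => ∫ s in (0 : ℝ)..t, g s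
  have hG : ∀ t, HasDerivAt G (g t) t := fun t => (hg.integral_hasStrictDerivAt 0 t).hasDerivAt
  have hconst : ∀ t, HasDerivAt (fun t => y t * Real.exp (-G t)) 0 t := fun t =>
    ((hy t).fun_mul (hG t).fun_neg.exp).congr_deriv (by ring)
  have h := is_const_of_deriv_eq_zero (fun t => (hconst t).differentiableAt)
    (fun t => (hconst t).deriv) t 0
  simp only [G, intervalIntegral.integral_same, neg_zero, Real.exp_zero, mul_one] at h
  rw [← h, mul_assoc, ← Real.exp_add, neg_add_cancel, Real.exp_zero, mul_one]

section ProdDeriv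

variable {𝕜 E F : Type*} [NontriviallyNormedField 𝕜] [NormedAddCommGroup E] [NormedSpace 𝕜 E]
  [NormedAddCommGroup F] [NormedSpace 𝕜 F] {f : 𝕜 → E × F} {f' : E × F} {x : 𝕜}

theorem HasDerivAt.fst (h : HasDerivAt f f' x) : HasDerivAt (fun s => (f s).1) f'.1 x :=
  HasFDerivAt.fst h

theorem HasDerivAt.snd (h : HasDerivAt f f' x) : HasDerivAt (fun s => (f s).2) f'.2 x :=
  HasFDerivAt.snd h

end ProdDeriv

theorem IsClosed.mem_of_ge_of_eventually_nhdsGT {X : Type*} [TopologicalSpace X] {K : Set X}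
    (hK : IsClosed K) {z : ℝ → X} (hz : Continuous z)
    (hloc : ∀ t, z t ∈ K → ∀ᶠ s in 𝓝[>] t, z s ∈ K) {t₀ t : ℝ} (h₀ : z t₀ ∈ K) (ht : t₀ ≤ t) :
    z t ∈ K :=
  ((hK.preimage hz).inter isClosed_Icc).Icc_subset_of_forall_mem_nhdsWithin h₀
    (fun s hs => hloc s hs.1) ⟨ht, le_rfl⟩

def lotkaVolterra (α β a b c d : ℝ) (p : ℝ × ℝ) : ℝ × ℝ :=
  (α * p.1 * (1 - a * p.1 - b * p.2), β * p.2 * (1 - c * p.1 - d * p.2))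

section LotkaVolterra

variable {α β a b c d xt yt : ℝ}

theorem lotkaVolterra_fst_pos (hα : 0 < α) (hxt : 0 < xt) (hb : 0 ≤ b)
    (hedge : a * xt + b * yt < 1) {p : ℝ × ℝ} (hp₁ : p.1 = xt) (hp₂ : p.2 ≤ yt) :
    0 < (lotkaVolterra α β a b c d p).1 := by
  have : 0 < 1 - a * p.1 - b * p.2 := by rw [hp₁]; nlinarith
  exact mul_pos (mul_pos hα (hp₁ ▸ hxt)) this

theorem lotkaVolterra_snd_neg (hβ : 0 < β) (hyt : 0 < yt) (hc : 0 < c)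
    (hline : c * xt + d * yt = 1) {p : ℝ × ℝ} (hp₁ : xt < p.1) (hp₂ : p.2 = yt) :
    (lotkaVolterra α β a b c d p).2 < 0 := by
  have : 1 - c * p.1 - d * p.2 < 0 := by rw [hp₂]; nlinarith
  exact mul_neg_of_pos_of_neg (by rw [hp₂]; positivity) this

variable {z : ℝ → ℝ × ℝ}

theorem lotkaVolterra_snd_nonneg (hz : ∀ t, HasDerivAt z (lotkaVolterra α β a b c d (z t)) t)
    (h₀ : 0 ≤ (z 0).2) (t : ℝ) : 0 ≤ (z t).2 := by
  have hcont : Continuous z := continuous_iff_continuousAt.2 fun s => (hz s).continuousAt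
  have hy : ∀ s, HasDerivAt (fun s => (z s).2)
      (β * (1 - c * (z s).1 - d * (z s).2) * (z s).2) s :=
    fun s => (hz s).snd.congr_deriv (by simp only [lotkaVolterra]; ring)
  rw [eq_mul_exp_integral_of_hasDerivAt_mul (by fun_prop) hy t]
  positivity

theorem lotkaVolterra_eventually_fst_ge (hα : 0 < α) (hxt : 0 < xt) (hb : 0 ≤ b)
    (hedge : a * xt + b * yt < 1) (hz : ∀ t, HasDerivAt z (lotkaVolterra α β a b c d (z t)) t)
    {t : ℝ} (hx : xt ≤ (z t).1) (hy : (z t).2 ≤ yt) : ∀ᶠ s in 𝓝[>] t, xt ≤ (z s).1 :=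
  ((hz t).fst.eventually_nhdsGT_gt hx fun h => lotkaVolterra_fst_pos hα hxt hb hedge h hy).mono
    fun _ => le_of_lt

theorem lotkaVolterra_eventually_snd_le (hα : 0 < α) (hβ : 0 < β) (hxt : 0 < xt) (hyt : 0 < yt)
    (hb : 0 ≤ b) (hc : 0 < c) (hedge : a * xt + b * yt < 1) (hline : c * xt + d * yt = 1)
    (hz : ∀ t, HasDerivAt z (lotkaVolterra α β a b c d (z t)) t)
    {t : ℝ} (hx : xt ≤ (z t).1) (hy : (z t).2 ≤ yt) : ∀ᶠ s in 𝓝[>] t, (z s).2 ≤ yt := by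
  rcases hy.lt_or_eq with hlt | heq
  · exact (((hz t).snd.continuousAt.eventually (gt_mem_nhds hlt)).filter_mono
      nhdsWithin_le_nhds).mono fun _ => le_of_lt
  suffices ∀ᶠ s in 𝓝[>] t, (z s).2 < (z t).2 from this.mono fun _ hs => heq ▸ hs.le
  rcases hx.lt_or_eq with hxlt | hxeq
  · exact (hz t).snd.eventually_nhdsGT_lt_of_neg (lotkaVolterra_snd_neg hβ hyt hc hline hxlt heq)
  · set v := lotkaVolterra α β a b c d (z t)
    have hv₁ : 0 < v.1 := lotkaVolterra_fst_pos hα hxt hb hedge hxeq.symm hy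
    have hv₂ : v.2 = 0 := by
      simp only [v, lotkaVolterra, ← hxeq, heq]
      rw [show 1 - c * xt - d * yt = 0 by linarith, mul_zero]
    have hy'' : HasDerivAt (fun s => (lotkaVolterra α β a b c d (z s)).2)
        (β * v.2 * (1 - c * (z t).1 - d * (z t).2) + β * (z t).2 * (-(c * v.1) - d * v.2)) t :=
      ((hz t).snd.const_mul β).mul ((((hz t).fst.const_mul c).const_sub 1).sub
        ((hz t).snd.const_mul d))
    refine eventually_nhdsGT_lt_of_deriv_eq_zero_of_deriv_neg (fun s => (hz s).snd) hv₂ hy'' ?_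
    rw [hv₂, heq]
    nlinarith [mul_pos (mul_pos (mul_pos hβ hyt) hc) hv₁]

theorem lotkaVolterra_mem_of_ge (hα : 0 < α) (hβ : 0 < β) (hxt : 0 < xt) (hyt : 0 < yt)
    (hb : 0 ≤ b) (hc : 0 < c) (hedge : a * xt + b * yt < 1) (hline : c * xt + d * yt = 1)
    (hz : ∀ t, HasDerivAt z (lotkaVolterra α β a b c d (z t)) t)
    (h₀ : z 0 ∈ Ici xt ×ˢ Icc 0 yt) {t : ℝ} (ht : 0 ≤ t) : z t ∈ Ici xt ×ˢ Icc 0 yt := by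
  have hcont : Continuous z := continuous_iff_continuousAt.2 fun s => (hz s).continuousAt
  obtain ⟨hx, hy⟩ : z t ∈ Ici xt ×ˢ Iic yt :=
    (isClosed_Ici.prod isClosed_Iic).mem_of_ge_of_eventually_nhdsGT hcont
      (fun s ⟨hx, hy⟩ => (lotkaVolterra_eventually_fst_ge hα hxt hb hedge hz hx hy).and
        (lotkaVolterra_eventually_snd_le hα hβ hxt hyt hb hc hedge hline hz hx hy))
      ⟨h₀.1, h₀.2.2⟩ ht
  exact ⟨hx, lotkaVolterra_snd_nonneg hz h₀.2.1 t, hy⟩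

end LotkaVolterra

/-- In the configuration `a₀ < c₀ < a₁ < c₁`, `b₁ < d₁ < b₀ < d₀`, the region
`K = {(x,y) : x ≥ xt, 0 ≤ y ≤ yt}` determined by the intersection `(xt,yt)` of the two
horizontal isoclines is positively invariant under both Lotka–Volterra flows. -/
theorem invariant_region
    (a₀ a₁ b₀ b₁ c₀ c₁ d₀ d₁ α₀ α₁ β₀ β₁ : ℝ)
    (ha₀ : 0 < a₀) (hb₁ : 0 < b₁) (hα₀ : 0 < α₀) (hα₁ : 0 < α₁)
    (hβ₀ : 0 < β₀) (hβ₁ : 0 < β₁)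
    (h1 : a₀ < c₀) (h2 : c₀ < a₁) (h3 : a₁ < c₁)
    (h4 : b₁ < d₁) (h5 : d₁ < b₀) (h6 : b₀ < d₀)
    (xt yt : ℝ) (hxt : 0 < xt) (hyt : 0 < yt)
    (hline₀ : c₀ * xt + d₀ * yt = 1) (hline₁ : c₁ * xt + d₁ * yt = 1) :
    let F₀ : ℝ × ℝ → ℝ × ℝ := fun p =>
      (α₀ * p.1 * (1 - a₀ * p.1 - b₀ * p.2), β₀ * p.2 * (1 - c₀ * p.1 - d₀ * p.2))
    let F₁ : ℝ × ℝ → ℝ × ℝ := fun p =>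
      (α₁ * p.1 * (1 - a₁ * p.1 - b₁ * p.2), β₁ * p.2 * (1 - c₁ * p.1 - d₁ * p.2))
    let K : Set (ℝ × ℝ) := {p | xt ≤ p.1 ∧ 0 ≤ p.2 ∧ p.2 ≤ yt}
    (∀ z : ℝ → ℝ × ℝ, (∀ t, HasDerivAt z (F₀ (z t)) t) → z 0 ∈ K →
      ∀ t ≥ (0:ℝ), z t ∈ K) ∧
    (∀ z : ℝ → ℝ × ℝ, (∀ t, HasDerivAt z (F₁ (z t)) t) → z 0 ∈ K →
      ∀ t ≥ (0:ℝ), z t ∈ K) := by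
  intro F₀ F₁ K
  have hedge₀ : a₀ * xt + b₀ * yt < 1 := by nlinarith
  have hedge₁ : a₁ * xt + b₁ * yt < 1 := by nlinarith
  exact ⟨fun z hz h₀ t ht => lotkaVolterra_mem_of_ge hα₀ hβ₀ hxt hyt (by linarith) (by linarith)
      hedge₀ hline₀ hz h₀ ht,
    fun z hz h₀ t ht => lotkaVolterra_mem_of_ge hα₁ hβ₁ hxt hyt hb₁.le (by linarith)
      hedge₁ hline₁ hz h₀ ht⟩
end
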